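/- arXiv:1105.0844 — 4 statements merged into one kernel-verified Lean document; each statement's English description precedes it below -/
import Mathlib

section
/- Let W ⊆ V¹ be a linear subspace such that span{⁅w,ξ⁆ : w ∈ W, ξ ∈ V²} is a proper subspace of V³. Then every γ ∈ H¹(0) taking all its values in W is a Goh curve: there exists a triple λ̃ = (λ¹,λ²,λ³) of linear functionals on V¹,V²,V³ with λ³ ≠ 0, λ² = 0, λ³⁅γ(t),⁅a,b⁆⁆ = 0 for all t ∈ [0,1] and all a,b ∈ V¹, and λ̃(d_γE(φ)) = 0 for every φ ∈ H¹(0). -/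
open MeasureTheory Set intervalIntegral

noncomputable section

variable {𝕓 : Type*} [NormedAddCommGroup 𝕓] [InnerProductSpace ℝ 𝕓] [FiniteDimensional ℝ 𝕓]

/-- The space `H¹(0)` of curves `γ : [0,1] → V¹` with `γ(t) = ∫₀ᵗ γ̇(s) ds` for a
square-integrable `γ̇` with values in `V¹`.  A curve is identified with its derivative
`γ̇ : ℝ → 𝕓`; the curve itself is recovered by `curve`. -/
def H1zero (V1 : Submodule ℝ 𝕓) : Submodule ℝ (ℝ → 𝕓) where
  carrier := {g | (∀ t, g t ∈ V1) ∧ MemLp g 2 (volume.restrict (Icc (0:ℝ) 1))}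
  add_mem' := fun hg hh => ⟨fun t => V1.add_mem (hg.1 t) (hh.1 t), hg.2.add hh.2⟩
  zero_mem' := ⟨fun _ => V1.zero_mem, MemLp.zero⟩
  smul_mem' := fun c _ hg => ⟨fun t => V1.smul_mem c (hg.1 t), hg.2.const_smul c⟩

/-- The curve associated to a derivative: `γ(t) = ∫₀ᵗ γ̇(s) ds`. -/
def curve (g : ℝ → 𝕓) (t : ℝ) : 𝕓 := ∫ s in (0:ℝ)..t, g s

variable (br : 𝕓 →ₗ[ℝ] 𝕓 →ₗ[ℝ] 𝕓)

/-- First layer of the end-point map: `F¹(γ) = γ(1)`. -/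
def F1 (g : ℝ → 𝕓) : 𝕓 := curve g 1

/-- The second layer `γ²(t) = ½∫₀ᵗ ⁅γ,γ̇⁆`. -/
def curve2 (g : ℝ → 𝕓) (t : ℝ) : 𝕓 := (2:ℝ)⁻¹ • ∫ s in (0:ℝ)..t, br (curve g s) (g s)

/-- Second layer of the end-point map: `F²(γ) = ½∫₀¹ ⁅γ,γ̇⁆`. -/
def F2 (g : ℝ → 𝕓) : 𝕓 := curve2 br g 1

/-- Third layer of the end-point map:
`F³(γ) = ∫₀¹ (½(⁅γ,γ̇²⁆ + ⁅γ²,γ̇⁆) − (1/6)⁅γ,⁅γ,γ̇⁆⁆)`, with `γ̇² = ½⁅γ,γ̇⁆`. -/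
def F3 (g : ℝ → 𝕓) : 𝕓 :=
  ∫ t in (0:ℝ)..1,
    ((2:ℝ)⁻¹ • (br (curve g t) ((2:ℝ)⁻¹ • br (curve g t) (g t)) + br (curve2 br g t) (g t))
      - (6:ℝ)⁻¹ • br (curve g t) (br (curve g t) (g t)))

/-- The end-point map `E(γ) = (F¹(γ), F²(γ), F³(γ)) ∈ V¹ ⊕ V² ⊕ V³`. -/
def Emap (g : ℝ → 𝕓) : 𝕓 × 𝕓 × 𝕓 := (F1 g, F2 br g, F3 br g)

/-- `d_γF¹(φ)`. -/
def dF1 (γ φ : ℝ → 𝕓) : 𝕓 := deriv (fun ε : ℝ => F1 (γ + ε • φ)) 0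

/-- `d_γF²(φ)`. -/
def dF2 (γ φ : ℝ → 𝕓) : 𝕓 := deriv (fun ε : ℝ => F2 br (γ + ε • φ)) 0

/-- `d_γF³(φ)`. -/
def dF3 (γ φ : ℝ → 𝕓) : 𝕓 := deriv (fun ε : ℝ => F3 br (γ + ε • φ)) 0

/-- The differential of the end-point map, `d_γE(φ) = (d/dε)|₀ E(γ + εφ)`. -/
def dE (γ φ : ℝ → 𝕓) : 𝕓 × 𝕓 × 𝕓 := deriv (fun ε : ℝ => Emap br (γ + ε • φ)) 0

/-- The Hessian of the end-point map, `d²_γE(φ,φ) = (d²/dε²)|₀ E(γ + εφ)`. -/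
def d2E (γ φ : ℝ → 𝕓) : 𝕓 × 𝕓 × 𝕓 := iteratedDeriv 2 (fun ε : ℝ => Emap br (γ + ε • φ)) 0

/-- The energy `L(γ) = ½∫₀¹ |γ̇|²`. -/
def energy (g : ℝ → 𝕓) : ℝ := (2:ℝ)⁻¹ * ∫ t in (0:ℝ)..1, ‖g t‖^2

/-- `γ` is a local minimizer of the energy subject to the end-point constraint. -/
def IsLocMin (V1 : Submodule ℝ 𝕓) (γ : ℝ → 𝕓) : Prop :=
  γ ∈ H1zero V1 ∧ ∃ ε > 0, ∀ h ∈ H1zero V1, Emap br h = Emap br γ →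
    (∫ t in (0:ℝ)..1, ‖γ t - h t‖^2) < ε → energy γ ≤ energy h

/-- `γ` is singular: the image of `d_γE` spans a proper subspace of `𝔟 = V¹ ⊕ V² ⊕ V³`. -/
def IsSingular (V1 V2 V3 : Submodule ℝ 𝕓) (γ : ℝ → 𝕓) : Prop :=
  Submodule.span ℝ {x : 𝕓 × 𝕓 × 𝕓 | ∃ φ ∈ H1zero V1, dE br γ φ = x}
    < V1.prod (V2.prod V3)

/-- A triple of linear functionals acting componentwise on `V¹ ⊕ V² ⊕ V³`. -/
def pairL (l1 l2 l3 : 𝕓 →ₗ[ℝ] ℝ) (x : 𝕓 × 𝕓 × 𝕓) : ℝ := l1 x.1 + l2 x.2.1 + l3 x.2.2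

/-- `𝔟` is a Carnot algebra of step at most 3 with layers `V¹, V², V³` and Lie bracket `br`:
the layers form an internal direct sum, `V² = span ⁅V¹,V¹⁆`, `V³ = span ⁅V¹,V²⁆`,
`⁅V¹,V³⁆ = 0`, and `br` is alternating and satisfies the Jacobi identity. -/
def CarnotStep3 (V1 V2 V3 : Submodule ℝ 𝕓) : Prop :=
  DirectSum.IsInternal ![V1, V2, V3] ∧
  V2 = Submodule.span ℝ {x | ∃ a ∈ V1, ∃ b ∈ V1, x = br a b} ∧
  V3 = Submodule.span ℝ {x | ∃ a ∈ V1, ∃ ξ ∈ V2, x = br a ξ} ∧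
  (∀ a ∈ V1, ∀ ζ ∈ V3, br a ζ = 0) ∧
  (∀ x, br x x = 0) ∧
  (∀ x y z, br x (br y z) + br y (br z x) + br z (br x y) = 0)

/-- The quadratic form `Q` restricted to `K` has finite Morse index: there is a uniform
bound on the dimension of subspaces contained in `K` on which `Q` is negative definite. -/
def HasFiniteMorseIndexOn (Q : (ℝ → 𝕓) → ℝ) (K : Set (ℝ → 𝕓)) : Prop :=
  ∃ N : ℕ, ∀ P : Submodule ℝ (ℝ → 𝕓), (P : Set (ℝ → 𝕓)) ⊆ K →
    (∀ φ ∈ P, φ ≠ 0 → Q φ < 0) → Module.rank ℝ P ≤ N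

/-- `γ` is a normal geodesic: there are multipliers `λ², λ³` such that
`∫₀¹ (⟨γ̇,φ̇⟩ + λ²⁅φ,γ̇⁆ + λ³⁅γ − ½γ(1), ⁅φ,γ̇⁆⁆) dt = 0` for all `φ ∈ H¹(0)` with `φ(1) = 0`. -/
def IsNormal (V1 : Submodule ℝ 𝕓) (γ : ℝ → 𝕓) : Prop :=
  ∃ l2 l3 : 𝕓 →ₗ[ℝ] ℝ,
    ∀ φ ∈ H1zero V1, curve φ 1 = 0 →
      (∫ t in (0:ℝ)..1,
        ((inner ℝ (γ t) (φ t) : ℝ) + l2 (br (curve φ t) (γ t))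
          + l3 (br (curve γ t - (2:ℝ)⁻¹ • curve γ 1) (br (curve φ t) (γ t))))) = 0

/-!
Take `λ² = 0`, a functional `λ³` that vanishes on `span ⁅W, V²⁆` but not on `V³`, and
`λ¹ = -½ λ³⁅F²(γ), ·⁆`. Along `γ + εφ` the end-point map is a cubic polynomial in `ε`, so
`d_γE(φ)` is its linear coefficient. After applying `λ³`, every term `⁅γ(t), ξ⁆` with `ξ ∈ V²`
drops out because `γ` takes values in `W`. The Jacobi identity and integration by parts (for
primitives of integrable functions, via Fubini) reduce what is left of `λ³(d_γF³(φ))` to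
`½ λ³⁅γ²(1), φ(1)⁆`, which `λ¹(φ(1))` cancels.
-/

open scoped Interval

theorem Submodule.integral_mem {α E : Type*} [MeasurableSpace α] {μ : Measure α}
    [NormedAddCommGroup E] [InnerProductSpace ℝ E] [CompleteSpace E]
    (U : Submodule ℝ E) [U.HasOrthogonalProjection] {f : α → E} (hf : ∀ x, f x ∈ U) :
    ∫ x, f x ∂μ ∈ U := by
  by_cases hi : Integrable f μ
  · rw [← U.starProjection_eq_self_iff, ← U.starProjection.integral_comp_comm hi]
    simp only [U.starProjection_eq_self_iff.2 (hf _)]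
  · simp [integral_undef hi]

theorem Submodule.intervalIntegral_mem {E : Type*}
    [NormedAddCommGroup E] [InnerProductSpace ℝ E] [CompleteSpace E]
    (U : Submodule ℝ E) [U.HasOrthogonalProjection] {f : ℝ → E} (hf : ∀ x, f x ∈ U) (a b : ℝ) :
    ∫ x in a..b, f x ∈ U :=
  U.sub_mem (U.integral_mem hf) (U.integral_mem hf)

section Analysis

variable {E F G : Type*} [NormedAddCommGroup E] [NormedSpace ℝ E]
  [NormedAddCommGroup F] [NormedSpace ℝ F] [NormedAddCommGroup G] [NormedSpace ℝ G]

theorem IntervalIntegrable.continuousOn_bilin (B : E →L[ℝ] F →L[ℝ] G) {X : ℝ → E} {Y : ℝ → F}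
    {a b : ℝ} (hX : ContinuousOn X [[a, b]]) (hY : IntervalIntegrable Y volume a b) :
    IntervalIntegrable (fun t => B (X t) (Y t)) volume a b := by
  obtain ⟨C, hC⟩ := isCompact_uIcc.exists_bound_of_continuousOn hX
  rw [intervalIntegrable_iff] at hY ⊢
  exact B.integrable_of_bilin_of_bdd_left C
    ((hX.mono uIoc_subset_uIcc).aestronglyMeasurable measurableSet_uIoc)
    (ae_restrict_of_forall_mem measurableSet_uIoc fun t ht => hC t (uIoc_subset_uIcc ht)) hY

theorem IntervalIntegrable.add_smul {f g : ℝ → E} {a b : ℝ} (hf : IntervalIntegrable f volume a b)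
    (hg : IntervalIntegrable g volume a b) (r : ℝ) :
    IntervalIntegrable (fun t => f t + r • g t) volume a b :=
  hf.add (hg.smul r)

theorem intervalIntegral.integral_add_smul {f g : ℝ → E} {a b : ℝ}
    (hf : IntervalIntegrable f volume a b) (hg : IntervalIntegrable g volume a b) (r : ℝ) :
    ∫ t in a..b, (f t + r • g t) = (∫ t in a..b, f t) + r • ∫ t in a..b, g t := by
  rw [integral_add (g := fun t => r • g t) hf (hg.smul r), intervalIntegral.integral_smul]

/-- Integration by parts for primitives of integrable functions: Fubini on the triangle
`s ≤ t` of `[0, b]²` and on its complement. -/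
theorem intervalIntegral.integral_bilin_primitive_add [CompleteSpace E] [CompleteSpace F]
    [CompleteSpace G] (B : E →L[ℝ] F →L[ℝ] G) {f : ℝ → E} {g : ℝ → F} {b : ℝ}
    (hb : 0 ≤ b) (hf : IntervalIntegrable f volume 0 b) (hg : IntervalIntegrable g volume 0 b) :
    (∫ t in 0..b, B (∫ s in 0..t, f s) (g t)) + ∫ t in 0..b, B (f t) (∫ s in 0..t, g s)
      = B (∫ s in 0..b, f s) (∫ s in 0..b, g s) := by
  set μ := volume.restrict (Ioc (0:ℝ) b)
  have hfμ : Integrable f μ := (intervalIntegrable_iff_integrableOn_Ioc_of_le hb).1 hf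
  have hgμ : Integrable g μ := (intervalIntegrable_iff_integrableOn_Ioc_of_le hb).1 hg
  set Φ : ℝ × ℝ → G := fun p => B (f p.1) (g p.2)
  have hΦ : Integrable Φ (μ.prod μ) := by
    refine Integrable.mono' ((hfμ.norm.mul_prod hgμ.norm).const_mul ‖B‖)
      (B.continuous₂.comp_aestronglyMeasurable
        (hfμ.aestronglyMeasurable.comp_fst.prodMk hgμ.aestronglyMeasurable.comp_snd)) ?_
    filter_upwards with p
    simpa [mul_assoc] using B.le_opNorm₂ (f p.1) (g p.2)
  set S := {p : ℝ × ℝ | p.1 ≤ p.2}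
  have hS : MeasurableSet S := measurableSet_le measurable_fst measurable_snd
  have left : ∫ t in 0..b, B (∫ s in 0..t, f s) (g t) = ∫ p, S.indicator Φ p ∂(μ.prod μ) := by
    rw [integral_prod_symm _ (hΦ.indicator hS), integral_of_le hb]
    refine setIntegral_congr_fun measurableSet_Ioc fun t ht => ?_
    have hI : Ioc 0 b ∩ Iic t = Ioc 0 t := by rw [Ioc_inter_Iic, inf_eq_right.2 ht.2]
    rw [integral_of_le ht.1.le, ← hI, ← setIntegral_indicator measurableSet_Iic, ← B.flip_apply,
      ← (B.flip (g t)).integral_comp_comm (hfμ.indicator measurableSet_Iic)]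
    congr 1 with s
    by_cases hst : s ≤ t <;> simp [S, Φ, hst]
  have right : ∫ t in 0..b, B (f t) (∫ s in 0..t, g s) = ∫ p, Sᶜ.indicator Φ p ∂(μ.prod μ) := by
    rw [integral_prod _ (hΦ.indicator hS.compl), integral_of_le hb]
    refine setIntegral_congr_fun measurableSet_Ioc fun t ht => ?_
    have hI : Ioc 0 b ∩ Iio t = Ioo 0 t :=
      Set.ext fun s => ⟨fun h => ⟨h.1.1, h.2⟩, fun h => ⟨⟨h.1, h.2.le.trans ht.2⟩, h.2⟩⟩
    rw [integral_of_le ht.1.le, integral_Ioc_eq_integral_Ioo, ← hI,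
      ← setIntegral_indicator measurableSet_Iio,
      ← (B (f t)).integral_comp_comm (hgμ.indicator measurableSet_Iio)]
    congr 1 with s
    by_cases hst : s < t <;> simp [S, Φ, hst]
  rw [left, right, ← MeasureTheory.integral_add (hΦ.indicator hS) (hΦ.indicator hS.compl),
    ← Pi.add_def, indicator_self_add_compl, integral_prod _ hΦ, integral_of_le hb,
    integral_of_le hb, ← B.flip_apply, ← (B.flip _).integral_comp_comm hfμ]
  congr 1 with s
  exact (B (f s)).integral_comp_comm hgμ

theorem hasDerivAt_cubic (a b c d : E) :
    HasDerivAt (fun ε : ℝ => a + ε • b + ε ^ 2 • c + ε ^ 3 • d) b 0 := by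
  simpa using ((((hasDerivAt_id (0:ℝ)).smul_const b).const_add a).fun_add
    ((hasDerivAt_pow 2 (0:ℝ)).smul_const c)).fun_add ((hasDerivAt_pow 3 (0:ℝ)).smul_const d)

end Analysis

section EndPointMap

variable {γ φ : ℝ → 𝕓}

def secondLayer (g h : ℝ → 𝕓) (t : ℝ) : 𝕓 := (2:ℝ)⁻¹ • ∫ s in (0:ℝ)..t, br (curve g s) (h s)

/-- The two `⁅γ,⁅γ,γ̇⁆⁆` terms of `F3` combine into `(¼ - ⅙)⁅γ,⁅γ,γ̇⁆⁆ = (1/12)⁅γ,⁅γ,γ̇⁆⁆`. -/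
def F3Density (g h k : ℝ → 𝕓) (t : ℝ) : 𝕓 :=
  (12:ℝ)⁻¹ • br (curve g t) (br (curve h t) (k t)) + (2:ℝ)⁻¹ • br (secondLayer br g h t) (k t)

def F3DensityDeriv (g h : ℝ → 𝕓) (t : ℝ) : 𝕓 :=
  F3Density br h g g t + F3Density br g h g t + F3Density br g g h t

omit [FiniteDimensional ℝ 𝕓] in
theorem curve2_eq_secondLayer (g : ℝ → 𝕓) : curve2 br g = secondLayer br g g := rfl

omit [FiniteDimensional ℝ 𝕓] in
theorem F3_eq_integral_F3Density (g : ℝ → 𝕓) :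
    F3 br g = ∫ t in (0:ℝ)..1, F3Density br g g g t := by
  refine integral_congr fun t _ => ?_
  simp only [F3Density, map_smul, curve2_eq_secondLayer]
  module

omit [FiniteDimensional ℝ 𝕓] in
theorem continuousOn_curve {g : ℝ → 𝕓} (hg : IntervalIntegrable g volume 0 1) :
    ContinuousOn (curve g) [[0, 1]] :=
  continuousOn_primitive_interval' hg left_mem_uIcc

theorem intervalIntegrable_br {X Y : ℝ → 𝕓} (hX : ContinuousOn X [[0, 1]])
    (hY : IntervalIntegrable Y volume 0 1) :
    IntervalIntegrable (fun t => br (X t) (Y t)) volume 0 1 :=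
  hY.continuousOn_bilin br.toContinuousBilinearMap hX

theorem intervalIntegrable_bracket_curve {g h : ℝ → 𝕓} (hg : IntervalIntegrable g volume 0 1)
    (hh : IntervalIntegrable h volume 0 1) {t : ℝ} (ht : t ∈ [[0, 1]]) :
    IntervalIntegrable (fun s => br (curve g s) (h s)) volume 0 t :=
  (intervalIntegrable_br br (continuousOn_curve hg) hh).mono_set
    (uIcc_subset_uIcc left_mem_uIcc ht)

theorem continuousOn_secondLayer {g h : ℝ → 𝕓} (hg : IntervalIntegrable g volume 0 1)
    (hh : IntervalIntegrable h volume 0 1) : ContinuousOn (secondLayer br g h) [[0, 1]] :=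
  (continuousOn_primitive_interval' (intervalIntegrable_br br (continuousOn_curve hg) hh)
    left_mem_uIcc).const_smul _

theorem intervalIntegrable_F3Density {g h k : ℝ → 𝕓} (hg : IntervalIntegrable g volume 0 1)
    (hh : IntervalIntegrable h volume 0 1) (hk : IntervalIntegrable k volume 0 1) :
    IntervalIntegrable (F3Density br g h k) volume 0 1 :=
  ((intervalIntegrable_br br (continuousOn_curve hg)
      (intervalIntegrable_br br (continuousOn_curve hh) hk)).smul _).add
    ((intervalIntegrable_br br (continuousOn_secondLayer br hg hh) hk).smul _)

theorem intervalIntegrable_F3DensityDeriv {g h : ℝ → 𝕓} (hg : IntervalIntegrable g volume 0 1)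
    (hh : IntervalIntegrable h volume 0 1) :
    IntervalIntegrable (F3DensityDeriv br g h) volume 0 1 :=
  ((intervalIntegrable_F3Density br hh hg hg).add (intervalIntegrable_F3Density br hg hh hg)).add
    (intervalIntegrable_F3Density br hg hg hh)

omit [FiniteDimensional ℝ 𝕓] in
theorem curve_add_smul (hγ : IntervalIntegrable γ volume 0 1)
    (hφ : IntervalIntegrable φ volume 0 1) (ε : ℝ) {t : ℝ} (ht : t ∈ [[0, 1]]) :
    curve (γ + ε • φ) t = curve γ t + ε • curve φ t := by
  have hsub := uIcc_subset_uIcc left_mem_uIcc ht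
  simp only [curve, Pi.add_apply, Pi.smul_apply]
  exact integral_add_smul (hγ.mono_set hsub) (hφ.mono_set hsub) ε

theorem secondLayer_add_smul (hγ : IntervalIntegrable γ volume 0 1)
    (hφ : IntervalIntegrable φ volume 0 1) (ε : ℝ) {t : ℝ} (ht : t ∈ [[0, 1]]) :
    secondLayer br (γ + ε • φ) (γ + ε • φ) t = secondLayer br γ γ t
      + ε • (secondLayer br φ γ t + secondLayer br γ φ t) + ε ^ 2 • secondLayer br φ φ t := by
  have hsub := uIcc_subset_uIcc left_mem_uIcc ht
  have expand : EqOn (fun s => br (curve (γ + ε • φ) s) ((γ + ε • φ) s))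
      (fun s => br (curve γ s) (γ s) + ε • (br (curve φ s) (γ s) + br (curve γ s) (φ s))
        + ε ^ 2 • br (curve φ s) (φ s)) [[0, t]] := fun s hs => by
    simp only [curve_add_smul hγ hφ ε (hsub hs), Pi.add_apply, Pi.smul_apply, map_add, map_smul,
      LinearMap.add_apply, LinearMap.smul_apply]
    module
  have h₀ := intervalIntegrable_bracket_curve br hγ hγ ht
  have h₁ := intervalIntegrable_bracket_curve br hφ hγ ht
  have h₂ := intervalIntegrable_bracket_curve br hγ hφ ht
  have h₃ := intervalIntegrable_bracket_curve br hφ hφ ht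
  simp only [secondLayer]
  rw [integral_congr expand, integral_add_smul (h₀.add_smul (h₁.add h₂) ε) h₃,
    integral_add_smul h₀ (h₁.add h₂), integral_add h₁ h₂]
  module

theorem F3Density_add_smul (hγ : IntervalIntegrable γ volume 0 1)
    (hφ : IntervalIntegrable φ volume 0 1) (ε : ℝ) {t : ℝ} (ht : t ∈ [[0, 1]]) :
    F3Density br (γ + ε • φ) (γ + ε • φ) (γ + ε • φ) t = F3Density br γ γ γ t
      + ε • F3DensityDeriv br γ φ t + ε ^ 2 • F3DensityDeriv br φ γ t
      + ε ^ 3 • F3Density br φ φ φ t := by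
  simp only [F3DensityDeriv, F3Density, curve_add_smul hγ hφ ε ht,
    secondLayer_add_smul br hγ hφ ε ht, Pi.add_apply, Pi.smul_apply, map_add, map_smul,
    LinearMap.add_apply, LinearMap.smul_apply]
  module

theorem F3_add_smul (hγ : IntervalIntegrable γ volume 0 1)
    (hφ : IntervalIntegrable φ volume 0 1) (ε : ℝ) :
    F3 br (γ + ε • φ) = F3 br γ + ε • (∫ t in (0:ℝ)..1, F3DensityDeriv br γ φ t)
      + ε ^ 2 • (∫ t in (0:ℝ)..1, F3DensityDeriv br φ γ t) + ε ^ 3 • F3 br φ := by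
  have h₀ := intervalIntegrable_F3Density br hγ hγ hγ
  have h₁ := intervalIntegrable_F3DensityDeriv br hγ hφ
  have h₂ := intervalIntegrable_F3DensityDeriv br hφ hγ
  rw [F3_eq_integral_F3Density, F3_eq_integral_F3Density, F3_eq_integral_F3Density,
    integral_congr fun t ht => F3Density_add_smul br hγ hφ ε ht,
    integral_add_smul ((h₀.add_smul h₁ ε).add_smul h₂ _) (intervalIntegrable_F3Density br hφ hφ hφ),
    integral_add_smul (h₀.add_smul h₁ ε) h₂, integral_add_smul h₀ h₁]

theorem Emap_add_smul (hγ : IntervalIntegrable γ volume 0 1)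
    (hφ : IntervalIntegrable φ volume 0 1) (ε : ℝ) :
    Emap br (γ + ε • φ) = Emap br γ
      + ε • (curve φ 1, secondLayer br φ γ 1 + secondLayer br γ φ 1,
          ∫ t in (0:ℝ)..1, F3DensityDeriv br γ φ t)
      + ε ^ 2 • (0, curve2 br φ 1, ∫ t in (0:ℝ)..1, F3DensityDeriv br φ γ t)
      + ε ^ 3 • (0, 0, F3 br φ) := by
  have h1 : (1:ℝ) ∈ [[0, 1]] := right_mem_uIcc
  simp only [Emap, F1, F2, curve_add_smul hγ hφ ε h1, curve2_eq_secondLayer,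
    secondLayer_add_smul br hγ hφ ε h1, F3_add_smul br hγ hφ ε, Prod.smul_mk, Prod.mk_add_mk,
    smul_zero, add_zero]

theorem dE_eq (hγ : IntervalIntegrable γ volume 0 1) (hφ : IntervalIntegrable φ volume 0 1) :
    dE br γ φ = (curve φ 1, secondLayer br φ γ 1 + secondLayer br γ φ 1,
      ∫ t in (0:ℝ)..1, F3DensityDeriv br γ φ t) := by
  rw [dE, funext (Emap_add_smul br hγ hφ)]
  exact (hasDerivAt_cubic _ _ _ _).deriv

end EndPointMap

section Goh

variable {γ φ : ℝ → 𝕓}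

omit [FiniteDimensional ℝ 𝕓] in
theorem intervalIntegrable_of_mem_H1zero {V : Submodule ℝ 𝕓} {g : ℝ → 𝕓} (hg : g ∈ H1zero V) :
    IntervalIntegrable g volume 0 1 :=
  (intervalIntegrable_iff_integrableOn_Icc_of_le zero_le_one).2 (hg.2.integrable one_le_two)

omit [FiniteDimensional ℝ 𝕓] in
theorem br_antisymm (halt : ∀ x, br x x = 0) (x y : 𝕓) : br x y = -br y x := by
  have h := halt (x + y)
  simp only [map_add, LinearMap.add_apply, halt, zero_add, add_zero] at h
  exact eq_neg_of_add_eq_zero_left ((add_comm _ _).trans h)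

theorem curve_mem {V : Submodule ℝ 𝕓} {g : ℝ → 𝕓} (hg : ∀ t, g t ∈ V) (t : ℝ) : curve g t ∈ V :=
  V.intervalIntegral_mem hg 0 t

theorem secondLayer_mem {V1 V2 : Submodule ℝ 𝕓} (hV2 : ∀ a ∈ V1, ∀ b ∈ V1, br a b ∈ V2)
    {g h : ℝ → 𝕓} (hg : ∀ t, g t ∈ V1) (hh : ∀ t, h t ∈ V1) (t : ℝ) : secondLayer br g h t ∈ V2 :=
  V2.smul_mem _ (V2.intervalIntegral_mem (fun s => hV2 _ (curve_mem hg s) _ (hh s)) 0 t)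

omit [FiniteDimensional ℝ 𝕓] in
theorem secondLayer_eq_curve (g h : ℝ → 𝕓) :
    secondLayer br g h = curve (fun s => (2:ℝ)⁻¹ • br (curve g s) (h s)) :=
  funext fun _ => (intervalIntegral.integral_smul _ _).symm

theorem br_curve_curve {g h : ℝ → 𝕓} (hg : IntervalIntegrable g volume 0 1)
    (hh : IntervalIntegrable h volume 0 1) {t : ℝ} (ht : t ∈ [[0, 1]]) :
    br (curve g t) (curve h t)
      = (∫ s in (0:ℝ)..t, br (curve g s) (h s)) + ∫ s in (0:ℝ)..t, br (g s) (curve h s) := by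
  have hsub := uIcc_subset_uIcc left_mem_uIcc ht
  rw [uIcc_of_le zero_le_one] at ht
  exact (integral_bilin_primitive_add br.toContinuousBilinearMap ht.1 (hg.mono_set hsub)
    (hh.mono_set hsub)).symm

theorem br_curve_curve_eq_secondLayer_sub (halt : ∀ x, br x x = 0)
    (hγ : IntervalIntegrable γ volume 0 1) (hφ : IntervalIntegrable φ volume 0 1)
    {t : ℝ} (ht : t ∈ [[0, 1]]) :
    br (curve γ t) (curve φ t) = (2:ℝ) • (secondLayer br γ φ t - secondLayer br φ γ t) := by
  simp only [br_curve_curve br hγ hφ ht, secondLayer, br_antisymm br halt (γ _),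
    intervalIntegral.integral_neg]
  module

variable (L : 𝕓 →ₗ[ℝ] ℝ)

theorem intervalIntegrable_L_br {X Y : ℝ → 𝕓} (hX : ContinuousOn X [[0, 1]])
    (hY : IntervalIntegrable Y volume 0 1) :
    IntervalIntegrable (fun t => L (br (X t) (Y t))) volume 0 1 :=
  hY.continuousOn_bilin (br.compr₂ L).toContinuousBilinearMap hX

theorem integral_L_br_curve_by_parts {f k : ℝ → 𝕓}
    (hf : IntervalIntegrable f volume 0 1) (hk : IntervalIntegrable k volume 0 1) :
    ∫ t in (0:ℝ)..1, L (br (curve f t) (k t))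
      = L (br (curve f 1) (curve k 1)) - ∫ t in (0:ℝ)..1, L (br (f t) (curve k t)) :=
  eq_sub_of_add_eq (integral_bilin_primitive_add (br.compr₂ L).toContinuousBilinearMap
    zero_le_one hf hk)

variable {V1 V2 W : Submodule ℝ 𝕓} (halt : ∀ x, br x x = 0)
  (hjac : ∀ x y z, br x (br y z) + br y (br z x) + br z (br x y) = 0)
  (hV2 : ∀ a ∈ V1, ∀ b ∈ V1, br a b ∈ V2) (hL : ∀ w ∈ W, ∀ ξ ∈ V2, L (br w ξ) = 0)
  (hγ : γ ∈ H1zero V1) (hγW : ∀ t ∈ [[(0:ℝ), 1]], curve γ t ∈ W)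
include halt hV2 hL hγ hγW

theorem integral_L_secondLayer_left_eq_zero {g h : ℝ → 𝕓} (hg : g ∈ H1zero V1)
    (hh : h ∈ H1zero V1) : ∫ t in (0:ℝ)..1, L (br (secondLayer br g h t) (γ t)) = 0 := by
  have vanish : ∀ t ∈ [[(0:ℝ), 1]], ∀ ξ ∈ V2, L (br ξ (curve γ t)) = 0 := fun t ht ξ hξ => by
    rw [br_antisymm br halt, map_neg, hL _ (hγW t ht) _ hξ, neg_zero]
  rw [secondLayer_eq_curve, integral_L_br_curve_by_parts br L
      (f := fun s => (2:ℝ)⁻¹ • br (curve g s) (h s))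
      ((intervalIntegrable_br br (continuousOn_curve (intervalIntegrable_of_mem_H1zero hg))
        (intervalIntegrable_of_mem_H1zero hh)).smul _) (intervalIntegrable_of_mem_H1zero hγ),
    ← secondLayer_eq_curve, vanish 1 right_mem_uIcc _ (secondLayer_mem br hV2 hg.1 hh.1 1),
    integral_congr fun t ht => vanish t ht _ (V2.smul_mem _ (hV2 _ (curve_mem hg.1 t) _ (hh.1 t))),
    intervalIntegral.integral_zero, sub_zero]

variable (hφ : φ ∈ H1zero V1)
include hjac hφ

theorem L_br_curve_br_eq {t : ℝ} (ht : t ∈ [[0, 1]]) :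
    L (br (curve φ t) (br (curve γ t) (γ t)))
      = 2 * (L (br (secondLayer br φ γ t) (γ t)) - L (br (secondLayer br γ φ t) (γ t))) := by
  have jacobi := congrArg L (hjac (curve φ t) (curve γ t) (γ t))
  have vanish := hL _ (hγW t ht) _ (hV2 _ (hγ.1 t) _ (curve_mem hφ.1 t))
  rw [br_antisymm br halt (γ t) (br (curve φ t) (curve γ t)),
    br_antisymm br halt (curve φ t) (curve γ t),
    br_curve_curve_eq_secondLayer_sub br halt (intervalIntegrable_of_mem_H1zero hγ)
      (intervalIntegrable_of_mem_H1zero hφ) ht] at jacobi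
  simp only [map_add, map_neg, map_smul, map_sub, LinearMap.neg_apply, LinearMap.smul_apply,
    LinearMap.sub_apply, smul_eq_mul, map_zero] at jacobi
  linarith

theorem integral_L_br_curve_br_eq_zero :
    ∫ t in (0:ℝ)..1, L (br (curve φ t) (br (curve γ t) (γ t))) = 0 := by
  have hγI := intervalIntegrable_of_mem_H1zero hγ
  have hφI := intervalIntegrable_of_mem_H1zero hφ
  rw [integral_congr fun t ht => L_br_curve_br_eq br L halt hjac hV2 hL hγ hγW hφ ht,
    intervalIntegral.integral_const_mul,
    integral_sub (intervalIntegrable_L_br br L (continuousOn_secondLayer br hφI hγI) hγI)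
      (intervalIntegrable_L_br br L (continuousOn_secondLayer br hγI hφI) hγI),
    integral_L_secondLayer_left_eq_zero br L halt hV2 hL hγ hγW hφ hγ,
    integral_L_secondLayer_left_eq_zero br L halt hV2 hL hγ hγW hγ hφ, sub_zero, mul_zero]

theorem integral_L_curve2_eq :
    ∫ t in (0:ℝ)..1, L (br (curve2 br γ t) (φ t)) = L (br (curve2 br γ 1) (curve φ 1)) := by
  have hγI := intervalIntegrable_of_mem_H1zero hγ
  have swap : ∀ t, L (br ((2:ℝ)⁻¹ • br (curve γ t) (γ t)) (curve φ t))
      = -(2:ℝ)⁻¹ * L (br (curve φ t) (br (curve γ t) (γ t))) := fun t => by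
    rw [br_antisymm br halt, map_smul, map_neg, map_smul, smul_eq_mul, neg_mul]
  rw [curve2_eq_secondLayer, secondLayer_eq_curve, integral_L_br_curve_by_parts br L
      (f := fun s => (2:ℝ)⁻¹ • br (curve γ s) (γ s))
      ((intervalIntegrable_br br (continuousOn_curve hγI) hγI).smul _)
      (intervalIntegrable_of_mem_H1zero hφ),
    funext swap, intervalIntegral.integral_const_mul,
    integral_L_br_curve_br_eq_zero br L halt hjac hV2 hL hγ hγW hφ, mul_zero, sub_zero]

theorem L_integral_F3DensityDeriv :
    L (∫ t in (0:ℝ)..1, F3DensityDeriv br γ φ t) = 2⁻¹ * L (br (curve2 br γ 1) (curve φ 1)) := by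
  have hγI := intervalIntegrable_of_mem_H1zero hγ
  have hφI := intervalIntegrable_of_mem_H1zero hφ
  have pointwise : ∀ t ∈ [[(0:ℝ), 1]], L (F3DensityDeriv br γ φ t)
      = 12⁻¹ * L (br (curve φ t) (br (curve γ t) (γ t)))
        + 2⁻¹ * (L (br (secondLayer br φ γ t) (γ t)) + L (br (secondLayer br γ φ t) (γ t))
          + L (br (curve2 br γ t) (φ t))) := fun t ht => by
    have h₁ := hL _ (hγW t ht) _ (hV2 _ (curve_mem hφ.1 t) _ (hγ.1 t))
    have h₂ := hL _ (hγW t ht) _ (hV2 _ (curve_mem hγ.1 t) _ (hφ.1 t))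
    simp only [F3DensityDeriv, F3Density, curve2_eq_secondLayer, map_add, map_smul, smul_eq_mul,
      h₁, h₂]
    ring
  have ha : IntervalIntegrable (fun t => L (br (curve φ t) (br (curve γ t) (γ t)))) volume 0 1 :=
    intervalIntegrable_L_br br L (continuousOn_curve hφI)
      (intervalIntegrable_br br (continuousOn_curve hγI) hγI)
  have hb := intervalIntegrable_L_br br L (continuousOn_secondLayer br hφI hγI) hγI
  have hc := intervalIntegrable_L_br br L (continuousOn_secondLayer br hγI hφI) hγI
  have hd : IntervalIntegrable (fun t => L (br (curve2 br γ t) (φ t))) volume 0 1 :=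
    intervalIntegrable_L_br br L (continuousOn_secondLayer br hγI hγI) hφI
  have comm : L (∫ t in (0:ℝ)..1, F3DensityDeriv br γ φ t)
      = ∫ t in (0:ℝ)..1, L (F3DensityDeriv br γ φ t) :=
    (L.toContinuousLinearMap.intervalIntegral_comp_comm
      (intervalIntegrable_F3DensityDeriv br hγI hφI)).symm
  rw [comm, integral_congr pointwise,
    integral_add (ha.const_mul _) (((hb.add hc).add hd).const_mul _),
    intervalIntegral.integral_const_mul, intervalIntegral.integral_const_mul,
    integral_add (hb.add hc) hd, integral_add hb hc,
    integral_L_br_curve_br_eq_zero br L halt hjac hV2 hL hγ hγW hφ,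
    integral_L_secondLayer_left_eq_zero br L halt hV2 hL hγ hγW hφ hγ,
    integral_L_secondLayer_left_eq_zero br L halt hV2 hL hγ hγW hγ hφ,
    integral_L_curve2_eq br L halt hjac hV2 hL hγ hγW hφ]
  ring

end Goh

theorem statement7 (V1 V2 V3 : Submodule ℝ 𝕓) (hC : CarnotStep3 br V1 V2 V3)
    (W : Submodule ℝ 𝕓)
    (hproper : Submodule.span ℝ {x | ∃ w ∈ W, ∃ ξ ∈ V2, x = br w ξ} < V3)
    (γ : ℝ → 𝕓) (hγ : γ ∈ H1zero V1)
    (hvals : ∀ t ∈ Icc (0:ℝ) 1, curve γ t ∈ W) :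
    ∃ l1 l2 l3 : 𝕓 →ₗ[ℝ] ℝ,
      (∃ x ∈ V3, l3 x ≠ 0) ∧ (∀ x ∈ V2, l2 x = 0) ∧
      (∀ t ∈ Icc (0:ℝ) 1, ∀ a ∈ V1, ∀ b ∈ V1, l3 (br (curve γ t) (br a b)) = 0) ∧
      (∀ φ ∈ H1zero V1, pairL l1 l2 l3 (dE br γ φ) = 0) := by
  obtain ⟨-, hV2eq, -, -, halt, hjac⟩ := hC
  have hV2 : ∀ a ∈ V1, ∀ b ∈ V1, br a b ∈ V2 := fun a ha b hb =>
    hV2eq ▸ Submodule.subset_span ⟨a, ha, b, hb, rfl⟩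
  obtain ⟨v, hv, hvS⟩ := SetLike.exists_of_lt hproper
  obtain ⟨L, hLv, hLS⟩ := Submodule.exists_dual_map_eq_bot_of_notMem hvS inferInstance
  have hL : ∀ w ∈ W, ∀ ξ ∈ V2, L (br w ξ) = 0 := fun w hw ξ hξ => (Submodule.mem_bot ℝ).1 <|
    hLS ▸ Submodule.mem_map_of_mem (Submodule.subset_span ⟨w, hw, ξ, hξ, rfl⟩)
  have hγW : ∀ t ∈ [[(0:ℝ), 1]], curve γ t ∈ W := by rwa [uIcc_of_le zero_le_one]
  refine ⟨-(2:ℝ)⁻¹ • L ∘ₗ br (F2 br γ), 0, L, ⟨v, hv, hLv⟩, fun _ _ => rfl,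
    fun t ht a ha b hb => hL _ (hvals t ht) _ (hV2 a ha b hb), fun φ hφ => ?_⟩
  rw [pairL, dE_eq br (intervalIntegrable_of_mem_H1zero hγ) (intervalIntegrable_of_mem_H1zero hφ),
    L_integral_F3DensityDeriv br L halt hjac hV2 hL hγ hγW hφ]
  simp only [F2, LinearMap.smul_apply, LinearMap.coe_comp, Function.comp_apply, smul_eq_mul,
    LinearMap.zero_apply, add_zero]
  ring
end
end

section
/- Let L be the free Lie algebra over ℝ on a finite set X with at least two elements, and let V ⊆ L be the linear span of the canonical generators. For every proper linear subspace W ⊊ V, the subspace span{⁅w,ξ⁆ : w ∈ W, ξ ∈ span{⁅u,v⁆ : u,v ∈ V}} is a proper subspace of span{⁅a,ξ⁆ : a ∈ V, ξ ∈ span{⁅u,v⁆ : u,v ∈ V}}. (This is the fact that in a free Carnot algebra of step 3 one has ⁅W,V²⁆ ⊊ V³ whenever W is a proper subspace of V¹, as used in Corollary 4.4(2).) -/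
/-!
Pick `v₀ ∈ V \ W` and a generator `v ∉ K ∙ v₀`, and functionals `f`, `g` with `f = 0` on `W`,
`f v₀ ≠ 0`, `g v₀ = 0`, `g v ≠ 0`. By freeness, `u ↦ f u • A + g u • B` on `V` extends to a Lie
homomorphism into the 4-dimensional filiform Lie algebra of strictly upper triangular matrices
spanned by `A`, `B`, `C = ⁅A, B⁆`, `D = ⁅A, C⁆`, where `⁅B, C⁆ = 0`. It maps `W` into `K ∙ B` and
`⁅V, V⁆` into `K ∙ C`, hence kills `⁅W, ⁅V, V⁆⁆`, but sends `⁅v₀, ⁅v₀, v⁆⁆` to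
`f v₀ ^ 2 * g v • D ≠ 0`.
-/

open Submodule

attribute [local instance 100] LieRing.ofAssociativeRing

section BracketSpan

variable {R L : Type*} [CommRing R] [LieRing L] [LieAlgebra R L]

def bracketSpan (S T : Submodule R L) : Submodule R L :=
  span R {x | ∃ a ∈ S, ∃ b ∈ T, x = ⁅a, b⁆}

lemma lie_mem_bracketSpan {S T : Submodule R L} {a b : L} (ha : a ∈ S) (hb : b ∈ T) :
    ⁅a, b⁆ ∈ bracketSpan S T :=
  subset_span ⟨a, ha, b, hb, rfl⟩

lemma bracketSpan_mono {S S' T T' : Submodule R L} (hS : S ≤ S') (hT : T ≤ T') :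
    bracketSpan S T ≤ bracketSpan S' T' :=
  span_mono fun _ ⟨a, ha, b, hb, h⟩ ↦ ⟨a, hS ha, b, hT hb, h⟩

lemma bracketSpan_le_comap {L' : Type*} [LieRing L'] [LieAlgebra R L'] (θ : L →ₗ⁅R⁆ L')
    {S T : Submodule R L} {P : Submodule R L'} (h : ∀ a ∈ S, ∀ b ∈ T, ⁅θ a, θ b⁆ ∈ P) :
    bracketSpan S T ≤ P.comap (θ : L →ₗ[R] L') := by
  refine span_le.2 ?_
  rintro _ ⟨a, ha, b, hb, rfl⟩
  simpa using h a ha b hb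

end BracketSpan

lemma LinearIndependent.exists_notMem_span_singleton {K M ι : Type*} [Field K] [AddCommGroup M]
    [Module K M] [Nontrivial ι] {v : ι → M} (hv : LinearIndependent K v) (z : M) :
    ∃ i, v i ∉ K ∙ z := by
  obtain ⟨i, j, hij⟩ := exists_pair_ne ι
  by_contra! h
  obtain ⟨a, ha⟩ := mem_span_singleton.1 (h i)
  obtain ⟨b, hb⟩ := mem_span_singleton.1 (h j)
  have ha0 : a ≠ 0 := by rintro rfl; exact hv.ne_zero i (by simp [← ha])
  refine hv.notMem_span_image (s := {i}) hij.symm ?_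
  rw [Set.image_singleton, mem_span_singleton]
  exact ⟨b / a, by rw [← ha, ← hb, smul_smul, div_mul_cancel₀ b ha0]⟩

namespace FreeLieAlgebra

variable {R X : Type*} [CommRing R]

lemma linearIndependent_of [Nontrivial R] :
    LinearIndependent R (of R : X → FreeLieAlgebra R X) := by
  classical
  -- the commutative ring `X → R` is an abelian Lie algebra, so `lift` reads off coordinates
  let π := (lift R fun x : X ↦ Pi.single x (1 : R)).toLinearMap
  have hπ : π ∘ of R = fun x ↦ Pi.single x 1 := funext fun x ↦ lift_of_apply _ x
  exact LinearIndependent.of_comp π (hπ ▸ Pi.linearIndependent_single_one X R)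

lemma lift_comp_of_apply_of_mem_span {L : Type*} [LieRing L] [LieAlgebra R L]
    (F : FreeLieAlgebra R X →ₗ[R] L) {u : FreeLieAlgebra R X} (hu : u ∈ span R (Set.range (of R))) :
    lift R (F ∘ of R) u = F u := by
  have : Set.EqOn (lift R (F ∘ of R) : FreeLieAlgebra R X →ₗ[R] L) F (Set.range (of R)) := by
    rintro _ ⟨x, rfl⟩
    simp
  exact LinearMap.eqOn_span this hu

end FreeLieAlgebra

namespace Filiform

variable (R : Type*) [CommRing R]

def A : Matrix (Fin 4) (Fin 4) R := Matrix.single 0 1 1 + Matrix.single 1 2 1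
def B : Matrix (Fin 4) (Fin 4) R := Matrix.single 2 3 1
def C : Matrix (Fin 4) (Fin 4) R := Matrix.single 1 3 1
def D : Matrix (Fin 4) (Fin 4) R := Matrix.single 0 3 1

lemma lie_A_B : ⁅A R, B R⁆ = C R := by
  simp [Ring.lie_def, A, B, C, add_mul, mul_add, Matrix.single_mul_single_same,
    Matrix.single_mul_single_of_ne]

lemma lie_A_C : ⁅A R, C R⁆ = D R := by
  simp [Ring.lie_def, A, C, D, add_mul, mul_add, Matrix.single_mul_single_same,
    Matrix.single_mul_single_of_ne]

lemma lie_B_C : ⁅B R, C R⁆ = 0 := by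
  simp [Ring.lie_def, B, C, Matrix.single_mul_single_of_ne]

lemma D_ne_zero [Nontrivial R] : D R ≠ 0 :=
  ne_of_apply_ne (· 0 3) (by simp [D])

variable {R}

lemma lie_smul_A_add_smul_B (a b a' b' : R) :
    ⁅a • A R + b • B R, a' • A R + b' • B R⁆ = (a * b' - b * a') • C R := by
  have lie_B_A : ⁅B R, A R⁆ = -C R := by rw [← lie_skew, lie_A_B]
  simp only [add_lie, lie_add, smul_lie, lie_smul, lie_self, smul_zero, lie_A_B, lie_B_A]
  module

lemma lie_smul_A_add_smul_B_smul_C (a b c : R) :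
    ⁅a • A R + b • B R, c • C R⁆ = (a * c) • D R := by
  simp only [add_lie, smul_lie, lie_smul, lie_A_C, lie_B_C, smul_zero]
  module

end Filiform

open Filiform

namespace FreeLieAlgebra

variable {K X : Type*} [Field K]

local notation "V" => span K (Set.range (of K : X → FreeLieAlgebra K X))

theorem lie_lie_notMem_bracketSpan {W : Submodule K (FreeLieAlgebra K X)} (hW : W ≤ V)
    {v₀ v : FreeLieAlgebra K X} (hv₀V : v₀ ∈ V) (hv₀W : v₀ ∉ W) (hvV : v ∈ V) (hv : v ∉ K ∙ v₀) :
    ⁅v₀, ⁅v₀, v⁆⁆ ∉ bracketSpan W (bracketSpan V V) := by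
  obtain ⟨f, hfv₀, hfW⟩ := W.exists_dual_map_eq_bot_of_notMem hv₀W inferInstance
  obtain ⟨g, hgv, hgv₀⟩ := (K ∙ v₀).exists_dual_map_eq_bot_of_notMem hv inferInstance
  rw [← LinearMap.le_ker_iff_map] at hfW hgv₀
  let θ := lift K ((f.smulRight (A K) + g.smulRight (B K)) ∘ of K)
  have hθV : ∀ u ∈ V, θ u = f u • A K + g u • B K := fun u hu ↦
    (lift_comp_of_apply_of_mem_span _ hu).trans (by simp)
  have hθW : ∀ w ∈ W, θ w = (0 : K) • A K + g w • B K := fun w hw ↦ by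
    rw [hθV w (hW hw), LinearMap.mem_ker.1 (hfW hw)]
  have hθV2 : bracketSpan V V ≤ (K ∙ C K).comap (θ : _ →ₗ[K] _) :=
    bracketSpan_le_comap θ fun u hu u' hu' ↦ by
      rw [hθV u hu, hθV u' hu', lie_smul_A_add_smul_B]
      exact smul_mem _ _ (mem_span_singleton_self _)
  have hker := bracketSpan_le_comap θ (S := W) (T := bracketSpan V V) (P := ⊥) fun w hw ξ hξ ↦ by
    obtain ⟨c, hc⟩ := mem_span_singleton.1 (hθV2 hξ)
    rw [hθW w hw, show θ ξ = c • C K from hc.symm, lie_smul_A_add_smul_B_smul_C, zero_mul,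
      zero_smul]
    exact zero_mem _
  have hθ_witness : θ ⁅v₀, ⁅v₀, v⁆⁆ = (f v₀ * (f v₀ * g v)) • D K := by
    have hgv₀ : g v₀ = 0 := hgv₀ (mem_span_singleton_self v₀)
    rw [LieHom.map_lie, LieHom.map_lie, hθV _ hv₀V, hθV _ hvV, lie_smul_A_add_smul_B,
      lie_smul_A_add_smul_B_smul_C, hgv₀, zero_mul, sub_zero]
  intro h
  simpa [hθ_witness, hfv₀, hgv, D_ne_zero] using hker h

theorem bracketSpan_lt_bracketSpan [Nontrivial X] {W : Submodule K (FreeLieAlgebra K X)}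
    (hW : W < V) : bracketSpan W (bracketSpan V V) < bracketSpan V (bracketSpan V V) := by
  obtain ⟨v₀, hv₀V, hv₀W⟩ := SetLike.exists_of_lt hW
  obtain ⟨x, hx⟩ := (linearIndependent_of (R := K) (X := X)).exists_notMem_span_singleton v₀
  have hxV : of K x ∈ V := subset_span ⟨x, rfl⟩
  exact SetLike.lt_iff_le_and_exists.2 ⟨bracketSpan_mono hW.le le_rfl, _,
    lie_mem_bracketSpan hv₀V (lie_mem_bracketSpan hv₀V hxV),
    lie_lie_notMem_bracketSpan hW.le hv₀V hv₀W hxV hx⟩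

end FreeLieAlgebra

theorem statement8_general (X : Type*) [Nontrivial X]
    (V : Submodule ℝ (FreeLieAlgebra ℝ X))
    (hV : V = Submodule.span ℝ (Set.range (FreeLieAlgebra.of ℝ : X → FreeLieAlgebra ℝ X)))
    (V2 : Submodule ℝ (FreeLieAlgebra ℝ X))
    (hV2 : V2 = Submodule.span ℝ {x | ∃ u ∈ V, ∃ v ∈ V, x = ⁅u, v⁆})
    (W : Submodule ℝ (FreeLieAlgebra ℝ X)) (hW : W < V) :
    Submodule.span ℝ {x | ∃ w ∈ W, ∃ ξ ∈ V2, x = ⁅w, ξ⁆}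
      < Submodule.span ℝ {x | ∃ a ∈ V, ∃ ξ ∈ V2, x = ⁅a, ξ⁆} := by
  subst hV hV2
  exact FreeLieAlgebra.bracketSpan_lt_bracketSpan hW

/-- in the free Lie algebra over `ℝ` on a finite set `X` with at least two
elements, if `W` is a proper subspace of the span `V` of the generators, then
`span ⁅W, span ⁅V,V⁆⁆` is a proper subspace of `span ⁅V, span ⁅V,V⁆⁆`. -/
theorem statement8 (X : Type*) [Fintype X] [Nontrivial X]
    (V : Submodule ℝ (FreeLieAlgebra ℝ X))
    (hV : V = Submodule.span ℝ (Set.range (FreeLieAlgebra.of ℝ : X → FreeLieAlgebra ℝ X)))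
    (V2 : Submodule ℝ (FreeLieAlgebra ℝ X))
    (hV2 : V2 = Submodule.span ℝ {x | ∃ u ∈ V, ∃ v ∈ V, x = ⁅u, v⁆})
    (W : Submodule ℝ (FreeLieAlgebra ℝ X)) (hW : W < V) :
    Submodule.span ℝ {x | ∃ w ∈ W, ∃ ξ ∈ V2, x = ⁅w, ξ⁆}
      < Submodule.span ℝ {x | ∃ a ∈ V, ∃ ξ ∈ V2, x = ⁅a, ξ⁆} :=
  statement8_general X V hV V2 hV2 W hW
end

section
/- (First variation of the third-layer end-point functional.) For all γ, φ ∈ H¹(0): d_γF³(φ) = ∫₀¹ ⁅γ,⁅φ,γ̇⁆⁆ dt + ½⁅∫₀¹ ⁅φ,γ̇⁆ dt, γ(1)⁆ + ¼⁅∫₀¹ ⁅γ,γ̇⁆ dt, φ(1)⁆ + (1/12)⁅γ(1),⁅γ(1),φ(1)⁆⁆. -/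
open MeasureTheory Set intervalIntegral

noncomputable section

variable {𝕓 : Type*} [NormedAddCommGroup 𝕓] [InnerProductSpace ℝ 𝕓] [FiniteDimensional ℝ 𝕓]

variable (br : 𝕓 →ₗ[ℝ] 𝕓 →ₗ[ℝ] 𝕓)

/-!
Since `γ̇² = ½⁅γ, γ̇⁆`, the integrand of `F³` is the diagonal of the trilinear expression
`(1/12)⁅γ₁, ⁅γ₂, γ̇₃⁆⁆ + (1/4)⁅∫₀ᵗ⁅γ₁, γ̇₂⁆, γ̇₃⁆`. Hence `F³(γ + εφ)` is a cubic polynomial in `ε`,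
and `d_γF³(φ)` is the integral of the three terms obtained by putting `φ` in one slot. Integrating
by parts moves each inner primitive `∫⁅·, ·⁆` out of its bracket, and the Jacobi identity
`⁅φ, ⁅γ, γ̇⁆⁆ = ⁅⁅φ, γ⁆, γ̇⁆ + ⁅γ, ⁅φ, γ̇⁆⁆`, where `⁅φ, γ⁆` is again such a primitive, leaves only
the closed form. For `H¹` curves the product rule `⁅U, V⁆' = ⁅u, V⁆ + ⁅U, v⁆` for primitives of
integrable `u, v` comes from Fubini on the square cut along its diagonal.
-/

section BilinearIntegration

variable {E F G : Type*} [NormedAddCommGroup E] [NormedSpace ℝ E]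
  [NormedAddCommGroup F] [NormedSpace ℝ F] [NormedAddCommGroup G] [NormedSpace ℝ G]

theorem ContinuousLinearMap.integrableOn_of_continuousOn_left {X : Type*} [TopologicalSpace X]
    [T2Space X] [MeasurableSpace X] [OpensMeasurableSpace X] [SecondCountableTopologyEither X E]
    {μ : Measure X} {K : Set X} (B : E →L[ℝ] F →L[ℝ] G) {f : X → E} {g : X → F}
    (hK : IsCompact K) (hf : ContinuousOn f K) (hg : IntegrableOn g K μ) :
    IntegrableOn (fun x => B (f x) (g x)) K μ := by
  obtain ⟨C, hC⟩ := hK.exists_bound_of_continuousOn hf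
  exact B.integrable_of_bilin_of_bdd_left C (hf.aestronglyMeasurable hK.measurableSet)
    (ae_restrict_of_forall_mem hK.measurableSet hC) hg

variable [CompleteSpace E] [CompleteSpace F] [CompleteSpace G]

theorem ContinuousLinearMap.integral_primitive_by_parts (B : E →L[ℝ] F →L[ℝ] G)
    {u : ℝ → E} {v : ℝ → F} {a b : ℝ} (hab : a ≤ b)
    (hu : IntervalIntegrable u volume a b) (hv : IntervalIntegrable v volume a b) :
    B (∫ s in a..b, u s) (∫ s in a..b, v s)
      = (∫ t in a..b, B (u t) (∫ s in a..t, v s)) + ∫ t in a..b, B (∫ s in a..t, u s) (v t) := by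
  set μ := volume.restrict (Ioc a b)
  have hu' : Integrable u μ := (intervalIntegrable_iff_integrableOn_Ioc_of_le hab).1 hu
  have hv' : Integrable v μ := (intervalIntegrable_iff_integrableOn_Ioc_of_le hab).1 hv
  set K : ℝ × ℝ → G := fun z => B (u z.1) (v z.2)
  set S : Set (ℝ × ℝ) := {z | z.2 ≤ z.1}
  have hK : Integrable K (μ.prod μ) := hu'.op_fst_snd (by fun_prop) ⟨‖B‖, B.le_opNorm₂⟩ hv'
  have hS : MeasurableSet S := measurableSet_le measurable_snd measurable_fst
  have hsub : ∀ t ∈ Ioc a b, uIcc a t ⊆ uIcc a b := fun t ht =>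
    uIcc_subset_uIcc_left (by rw [uIcc_of_le hab]; exact Ioc_subset_Icc_self ht)
  have lower : ∫ z, S.indicator K z ∂μ.prod μ = ∫ t in a..b, B (u t) (∫ s in a..t, v s) := by
    rw [integral_prod _ (hK.indicator hS), integral_of_le hab]
    refine integral_congr_ae (ae_restrict_of_forall_mem measurableSet_Ioc fun t ht => ?_)
    have hind : (fun s => S.indicator K (t, s)) = {s | s ≤ t}.indicator (B (u t) ∘ v) := by
      ext s; simp [S, K, indicator_apply]
    calc ∫ s, S.indicator K (t, s) ∂μ
        = ∫ s in a..b, {s | s ≤ t}.indicator (B (u t) ∘ v) s := by rw [hind, integral_of_le hab]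
      _ = ∫ s in a..t, B (u t) (v s) := integral_indicator (Ioc_subset_Icc_self ht)
      _ = B (u t) (∫ s in a..t, v s) :=
        (B (u t)).intervalIntegral_comp_comm (hv.mono_set (hsub t ht))
  have upper : ∫ z, Sᶜ.indicator K z ∂μ.prod μ = ∫ t in a..b, B (∫ s in a..t, u s) (v t) := by
    rw [integral_prod_symm _ (hK.indicator hS.compl), integral_of_le hab]
    refine integral_congr_ae (ae_restrict_of_forall_mem measurableSet_Ioc fun t ht => ?_)
    have hind : (fun s => Sᶜ.indicator K (s, t)) = (Iio t).indicator (B.flip (v t) ∘ u) := by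
      ext s; simp [S, K, indicator_apply]
    calc ∫ s, Sᶜ.indicator K (s, t) ∂μ
        = ∫ s in a..b, {s | s ≤ t}.indicator (B.flip (v t) ∘ u) s := by
          rw [hind, integral_of_le hab]
          exact integral_congr_ae (ae_restrict_of_ae (indicator_ae_eq_of_ae_eq_set Iio_ae_eq_Iic))
      _ = ∫ s in a..t, B.flip (v t) (u s) := integral_indicator (Ioc_subset_Icc_self ht)
      _ = B (∫ s in a..t, u s) (v t) :=
        (B.flip (v t)).intervalIntegral_comp_comm (hu.mono_set (hsub t ht))
  calc B (∫ s in a..b, u s) (∫ s in a..b, v s) = ∫ z, K z ∂μ.prod μ := by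
        rw [integral_prod_bilin B hu' hv', integral_of_le hab, integral_of_le hab]
    _ = ∫ z, (S.indicator K z + Sᶜ.indicator K z) ∂μ.prod μ := by
        simp_rw [indicator_self_add_compl_apply]
    _ = _ := by rw [integral_add (hK.indicator hS) (hK.indicator hS.compl), lower, upper]

end BilinearIntegration

theorem deriv_integral_cubic {E : Type*} [NormedAddCommGroup E] [NormedSpace ℝ E]
    {c₀ c₁ c₂ c₃ : ℝ → E} {a b : ℝ}
    (h₀ : IntervalIntegrable c₀ volume a b) (h₁ : IntervalIntegrable c₁ volume a b)
    (h₂ : IntervalIntegrable c₂ volume a b) (h₃ : IntervalIntegrable c₃ volume a b) :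
    deriv (fun ε : ℝ => ∫ t in a..b, (c₀ t + ε • c₁ t + ε ^ 2 • c₂ t + ε ^ 3 • c₃ t)) 0
      = ∫ t in a..b, c₁ t := by
  have hsplit : ∀ ε : ℝ, ∫ t in a..b, (c₀ t + ε • c₁ t + ε ^ 2 • c₂ t + ε ^ 3 • c₃ t)
      = (∫ t in a..b, c₀ t) + ε • (∫ t in a..b, c₁ t) + ε ^ 2 • (∫ t in a..b, c₂ t)
        + ε ^ 3 • ∫ t in a..b, c₃ t := fun ε => by
    have h₁' : IntervalIntegrable (fun t => ε • c₁ t) volume a b := h₁.smul ε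
    have h₂' : IntervalIntegrable (fun t => ε ^ 2 • c₂ t) volume a b := h₂.smul _
    have h₃' : IntervalIntegrable (fun t => ε ^ 3 • c₃ t) volume a b := h₃.smul _
    rw [integral_add ((h₀.add h₁').add h₂') h₃', integral_add (h₀.add h₁') h₂',
      integral_add h₀ h₁', intervalIntegral.integral_smul, intervalIntegral.integral_smul,
      intervalIntegral.integral_smul]
  simp_rw [hsplit]
  have h := (((hasDerivAt_const (0 : ℝ) (∫ t in a..b, c₀ t)).add
    ((hasDerivAt_id (0 : ℝ)).smul_const (∫ t in a..b, c₁ t))).add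
    ((hasDerivAt_pow 2 (0 : ℝ)).smul_const (∫ t in a..b, c₂ t))).add
    ((hasDerivAt_pow 3 (0 : ℝ)).smul_const (∫ t in a..b, c₃ t))
  convert h.deriv using 1 <;> simp [Pi.add_def]

theorem MeasureTheory.IntegrableOn.intervalIntegrable_of_mem_Icc {E : Type*}
    [NormedAddCommGroup E] {f : ℝ → E} {a b c d : ℝ} (hf : IntegrableOn f (Icc a b))
    (hc : c ∈ Icc a b) (hd : d ∈ Icc a b) : IntervalIntegrable f volume c d :=
  (hf.mono_set (uIcc_subset_Icc hc hd)).intervalIntegrable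

theorem leibniz_of_jacobi {R M : Type*} [CommRing R] [AddCommGroup M] [Module R M]
    {br : M →ₗ[R] M →ₗ[R] M} (halt : br.IsAlt)
    (hjac : ∀ x y z, br x (br y z) + br y (br z x) + br z (br x y) = 0) (a b c : M) :
    br a (br b c) = br (br a b) c + br b (br a c) := by
  have h := hjac a b c
  rw [← halt.neg a c, map_neg, ← halt.neg (br a b) c] at h
  linear_combination (norm := module) h

section Curve

variable {E : Type*} [NormedAddCommGroup E] [InnerProductSpace ℝ E] {f g : ℝ → E} {t : ℝ}

theorem continuousOn_curve_s13 (hf : IntegrableOn f (Icc 0 1)) :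
    ContinuousOn (curve f) (Icc 0 1) := by
  have := continuousOn_primitive_interval (a := (0 : ℝ)) (b := 1)
    (by rwa [uIcc_of_le zero_le_one])
  rwa [uIcc_of_le zero_le_one] at this

theorem curve_add (hf : IntegrableOn f (Icc 0 1)) (hg : IntegrableOn g (Icc 0 1))
    (ht : t ∈ Icc (0 : ℝ) 1) : curve (f + g) t = curve f t + curve g t :=
  integral_add (hf.intervalIntegrable_of_mem_Icc (left_mem_Icc.2 zero_le_one) ht)
    (hg.intervalIntegrable_of_mem_Icc (left_mem_Icc.2 zero_le_one) ht)

theorem curve_sub (hf : IntegrableOn f (Icc 0 1)) (hg : IntegrableOn g (Icc 0 1))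
    (ht : t ∈ Icc (0 : ℝ) 1) : curve (fun s => f s - g s) t = curve f t - curve g t :=
  integral_sub (hf.intervalIntegrable_of_mem_Icc (left_mem_Icc.2 zero_le_one) ht)
    (hg.intervalIntegrable_of_mem_Icc (left_mem_Icc.2 zero_le_one) ht)

theorem curve_smul (c : ℝ) (f : ℝ → E) (t : ℝ) : curve (c • f) t = c • curve f t :=
  intervalIntegral.integral_smul c f

theorem curve_add_smul_s13 (hf : IntegrableOn f (Icc 0 1)) (hg : IntegrableOn g (Icc 0 1)) (ε : ℝ)
    (ht : t ∈ Icc (0 : ℝ) 1) : curve (f + ε • g) t = curve f t + ε • curve g t := by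
  rw [curve_add hf (hg.smul ε) ht, curve_smul]

theorem curve_congr (ht : 0 ≤ t) (h : EqOn f g (Icc 0 t)) : curve f t = curve g t :=
  integral_congr (by rwa [uIcc_of_le ht])

end Curve

section ThirdLayerForm

variable {E : Type*} [NormedAddCommGroup E] [InnerProductSpace ℝ E] (br : E →ₗ[ℝ] E →ₗ[ℝ] E)

/-- `t ↦ ∫₀ᵗ ⁅γ₁, γ̇₂⁆`; on the diagonal it is `2γ²`. -/
def curveBr (g₁ g₂ : ℝ → E) : ℝ → E := curve (fun s => br (curve g₁ s) (g₂ s))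

def F3Form (g₁ g₂ g₃ : ℝ → E) (t : ℝ) : E :=
  (12 : ℝ)⁻¹ • br (curve g₁ t) (br (curve g₂ t) (g₃ t))
    + (4 : ℝ)⁻¹ • br (curveBr br g₁ g₂ t) (g₃ t)

theorem F3_eq_integral_F3Form (g : ℝ → E) :
    F3 br g = ∫ t in (0 : ℝ)..1, F3Form br g g g t := by
  refine integral_congr fun t _ => ?_
  simp only [F3Form, curveBr, curve, curve2, map_smul, LinearMap.smul_apply]
  module

variable [FiniteDimensional ℝ E] {x y : ℝ → E}

theorem integrableOn_br_curve {f g : ℝ → E} (hf : IntegrableOn f (Icc 0 1))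
    (hg : IntegrableOn g (Icc 0 1)) : IntegrableOn (fun t => br (curve f t) (g t)) (Icc 0 1) :=
  br.toContinuousBilinearMap.integrableOn_of_continuousOn_left isCompact_Icc
    (continuousOn_curve_s13 hf) hg

theorem intervalIntegrable_br_curve {f g : ℝ → E} (hf : IntegrableOn f (Icc 0 1))
    (hg : IntegrableOn g (Icc 0 1)) :
    IntervalIntegrable (fun t => br (curve f t) (g t)) volume 0 1 :=
  (intervalIntegrable_iff_integrableOn_Icc_of_le zero_le_one).2 (integrableOn_br_curve br hf hg)

theorem curveBr_add_smul (hx : IntegrableOn x (Icc 0 1)) (hy : IntegrableOn y (Icc 0 1))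
    (ε : ℝ) {t : ℝ} (ht : t ∈ Icc (0 : ℝ) 1) :
    curveBr br (x + ε • y) (x + ε • y) t = curveBr br x x t
      + ε • (curveBr br x y t + curveBr br y x t) + ε ^ 2 • curveBr br y y t := by
  have hxx := integrableOn_br_curve br hx hx
  have hxy := integrableOn_br_curve br hx hy
  have hyx := integrableOn_br_curve br hy hx
  have hyy := integrableOn_br_curve br hy hy
  calc curveBr br (x + ε • y) (x + ε • y) t
      = curve ((fun s => br (curve x s) (x s)) + ε • ((fun s => br (curve x s) (y s))
          + fun s => br (curve y s) (x s)) + ε ^ 2 • fun s => br (curve y s) (y s)) t := by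
        refine curve_congr ht.1 fun s hs => ?_
        simp only [Pi.add_apply, Pi.smul_apply, curve_add_smul_s13 hx hy ε ⟨hs.1, hs.2.trans ht.2⟩,
          map_add, map_smul, LinearMap.add_apply, LinearMap.smul_apply]
        module
    _ = _ := by
        rw [curve_add (hxx.add ((hxy.add hyx).smul ε)) (hyy.smul _) ht,
          curve_add hxx ((hxy.add hyx).smul ε) ht, curve_smul, curve_smul,
          curve_add hxy hyx ht]
        rfl

theorem F3Form_add_smul (hx : IntegrableOn x (Icc 0 1)) (hy : IntegrableOn y (Icc 0 1))
    (ε : ℝ) {t : ℝ} (ht : t ∈ Icc (0 : ℝ) 1) :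
    F3Form br (x + ε • y) (x + ε • y) (x + ε • y) t = F3Form br x x x t
      + ε • (F3Form br y x x t + F3Form br x y x t + F3Form br x x y t)
      + ε ^ 2 • (F3Form br x y y t + F3Form br y x y t + F3Form br y y x t)
      + ε ^ 3 • F3Form br y y y t := by
  simp only [F3Form, curveBr_add_smul br hx hy ε ht, curve_add_smul_s13 hx hy ε ht, Pi.add_apply,
    Pi.smul_apply, map_add, map_smul, LinearMap.add_apply, LinearMap.smul_apply]
  module

theorem intervalIntegrable_F3Form {g₁ g₂ g₃ : ℝ → E} (h₁ : IntegrableOn g₁ (Icc 0 1))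
    (h₂ : IntegrableOn g₂ (Icc 0 1)) (h₃ : IntegrableOn g₃ (Icc 0 1)) :
    IntervalIntegrable (F3Form br g₁ g₂ g₃) volume 0 1 :=
  ((intervalIntegrable_br_curve br h₁ (integrableOn_br_curve br h₂ h₃)).smul _).add
    ((intervalIntegrable_br_curve br (integrableOn_br_curve br h₁ h₂) h₃).smul _)

theorem integral_F3Form {g₁ g₂ g₃ : ℝ → E} (h₁ : IntegrableOn g₁ (Icc 0 1))
    (h₂ : IntegrableOn g₂ (Icc 0 1)) (h₃ : IntegrableOn g₃ (Icc 0 1)) :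
    ∫ t in (0 : ℝ)..1, F3Form br g₁ g₂ g₃ t
      = (12 : ℝ)⁻¹ • (∫ t in (0 : ℝ)..1, br (curve g₁ t) (br (curve g₂ t) (g₃ t)))
        + (4 : ℝ)⁻¹ • ∫ t in (0 : ℝ)..1, br (curveBr br g₁ g₂ t) (g₃ t) := by
  rw [← intervalIntegral.integral_smul, ← intervalIntegral.integral_smul]
  exact integral_add ((intervalIntegrable_br_curve br h₁ (integrableOn_br_curve br h₂ h₃)).smul _)
    ((intervalIntegrable_br_curve br (integrableOn_br_curve br h₁ h₂) h₃).smul _)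

theorem dF3_eq_integral_F3Form (hx : IntegrableOn x (Icc 0 1))
    (hy : IntegrableOn y (Icc 0 1)) :
    dF3 br x y
      = ∫ t in (0 : ℝ)..1, (F3Form br y x x t + F3Form br x y x t + F3Form br x x y t) := by
  have hexp : ∀ ε : ℝ, F3 br (x + ε • y) = ∫ t in (0 : ℝ)..1, (F3Form br x x x t
      + ε • (F3Form br y x x t + F3Form br x y x t + F3Form br x x y t)
      + ε ^ 2 • (F3Form br x y y t + F3Form br y x y t + F3Form br y y x t)
      + ε ^ 3 • F3Form br y y y t) := fun ε => by
    rw [F3_eq_integral_F3Form]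
    refine integral_congr fun t ht => F3Form_add_smul br hx hy ε ?_
    rwa [uIcc_of_le zero_le_one] at ht
  have hI {g₁ g₂ g₃ : ℝ → E} := intervalIntegrable_F3Form br (g₁ := g₁) (g₂ := g₂) (g₃ := g₃)
  rw [dF3, funext hexp]
  exact deriv_integral_cubic (hI hx hx hx) (((hI hy hx hx).add (hI hx hy hx)).add (hI hx hx hy))
    (((hI hx hy hy).add (hI hy hx hy)).add (hI hy hy hx)) (hI hy hy hy)

end ThirdLayerForm

section ClosedForm

variable {E : Type*} [NormedAddCommGroup E] [InnerProductSpace ℝ E] [FiniteDimensional ℝ E]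
  {br : E →ₗ[ℝ] E →ₗ[ℝ] E} {γ φ u v : ℝ → E}

theorem br_curve_curve_s13 (halt : br.IsAlt) (hu : IntegrableOn u (Icc 0 1))
    (hv : IntegrableOn v (Icc 0 1)) {t : ℝ} (ht : t ∈ Icc (0 : ℝ) 1) :
    br (curve u t) (curve v t)
      = curve (fun s => br (curve u s) (v s) - br (curve v s) (u s)) t := by
  have h0 : (0 : ℝ) ∈ Icc (0 : ℝ) 1 := left_mem_Icc.2 zero_le_one
  have hibp := br.toContinuousBilinearMap.integral_primitive_by_parts ht.1
    (hu.intervalIntegrable_of_mem_Icc h0 ht) (hv.intervalIntegrable_of_mem_Icc h0 ht)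
  have hneg : ∫ s in (0 : ℝ)..t, br (u s) (∫ r in (0 : ℝ)..s, v r)
      = -∫ s in (0 : ℝ)..t, br (curve v s) (u s) := by
    rw [← intervalIntegral.integral_neg]
    exact integral_congr fun s _ => (halt.neg _ _).symm
  simp only [LinearMap.toContinuousBilinearMap_apply] at hibp
  rw [hneg] at hibp
  rw [curve_sub (integrableOn_br_curve br hu hv) (integrableOn_br_curve br hv hu) ht]
  exact hibp.trans (neg_add_eq_sub _ _)

theorem integral_br_curve (halt : br.IsAlt) (hu : IntegrableOn u (Icc 0 1))
    (hv : IntegrableOn v (Icc 0 1)) :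
    ∫ t in (0 : ℝ)..1, br (curve u t) (v t)
      = br (curve u 1) (curve v 1) + ∫ t in (0 : ℝ)..1, br (curve v t) (u t) := by
  rw [br_curve_curve_s13 halt hu hv (right_mem_Icc.2 zero_le_one),
    curve_sub (integrableOn_br_curve br hu hv) (integrableOn_br_curve br hv hu)
      (right_mem_Icc.2 zero_le_one)]
  exact (sub_add_cancel _ _).symm

/-- The Jacobi identity trades `⁅φ, ⁅γ, γ̇⁆⁆` for `⁅γ, ⁅φ, γ̇⁆⁆ + ⁅⁅φ, γ⁆, γ̇⁆`, and `⁅φ, γ⁆` is the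
primitive of `⁅φ, γ̇⁆ - ⁅γ, φ̇⁆`, so one more integration by parts applies. -/
theorem integral_br_curve_br_curve (halt : br.IsAlt)
    (hjac : ∀ x y z, br x (br y z) + br y (br z x) + br z (br x y) = 0)
    (hγ : IntegrableOn γ (Icc 0 1)) (hφ : IntegrableOn φ (Icc 0 1)) :
    ∫ t in (0 : ℝ)..1, br (curve φ t) (br (curve γ t) (γ t))
      = (2 : ℝ) • (∫ t in (0 : ℝ)..1, br (curve γ t) (br (curve φ t) (γ t)))
        + br (curve γ 1) (br (curve γ 1) (curve φ 1))
        - ∫ t in (0 : ℝ)..1, br (curve γ t) (br (curve γ t) (φ t)) := by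
  set w : ℝ → E := fun s => br (curve φ s) (γ s) - br (curve γ s) (φ s)
  have hw : IntegrableOn w (Icc 0 1) :=
    (integrableOn_br_curve br hφ hγ).sub (integrableOn_br_curve br hγ hφ)
  have hφγ : ∀ t ∈ Icc (0 : ℝ) 1, br (curve φ t) (curve γ t) = curve w t :=
    fun t ht => br_curve_curve_s13 halt hφ hγ ht
  have hjacobi : ∫ t in (0 : ℝ)..1, br (curve φ t) (br (curve γ t) (γ t))
      = (∫ t in (0 : ℝ)..1, br (curve w t) (γ t))
        + ∫ t in (0 : ℝ)..1, br (curve γ t) (br (curve φ t) (γ t)) := by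
    rw [← integral_add (intervalIntegrable_br_curve br hw hγ)
      (intervalIntegrable_br_curve br hγ (integrableOn_br_curve br hφ hγ))]
    refine integral_congr fun t ht => ?_
    rw [leibniz_of_jacobi halt hjac, hφγ t (by rwa [uIcc_of_le zero_le_one] at ht)]
  have hparts := integral_br_curve halt hw hγ
  rw [← hφγ 1 (right_mem_Icc.2 zero_le_one), ← halt.neg (curve γ 1),
    ← halt.neg (curve γ 1) (curve φ 1), map_neg, neg_neg] at hparts
  have hsplit : ∫ t in (0 : ℝ)..1, br (curve γ t) (w t)
      = (∫ t in (0 : ℝ)..1, br (curve γ t) (br (curve φ t) (γ t)))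
        - ∫ t in (0 : ℝ)..1, br (curve γ t) (br (curve γ t) (φ t)) := by
    rw [← integral_sub (intervalIntegrable_br_curve br hγ (integrableOn_br_curve br hφ hγ))
      (intervalIntegrable_br_curve br hγ (integrableOn_br_curve br hγ hφ))]
    exact integral_congr fun t _ => map_sub _ _ _
  rw [hjacobi, hparts, hsplit]
  module

theorem integral_polarized_F3Form_eq (halt : br.IsAlt)
    (hjac : ∀ x y z, br x (br y z) + br y (br z x) + br z (br x y) = 0)
    (hγ : IntegrableOn γ (Icc 0 1)) (hφ : IntegrableOn φ (Icc 0 1)) :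
    ∫ t in (0 : ℝ)..1, (F3Form br φ γ γ t + F3Form br γ φ γ t + F3Form br γ γ φ t)
      = (∫ t in (0 : ℝ)..1, br (curve γ t) (br (curve φ t) (γ t)))
        + (2 : ℝ)⁻¹ • br (curveBr br φ γ 1) (curve γ 1)
        + (4 : ℝ)⁻¹ • br (curveBr br γ γ 1) (curve φ 1)
        + (12 : ℝ)⁻¹ • br (curve γ 1) (br (curve γ 1) (curve φ 1)) := by
  have hI {g₁ g₂ g₃ : ℝ → E} := intervalIntegrable_F3Form br (g₁ := g₁) (g₂ := g₂) (g₃ := g₃)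
  have h1 : (1 : ℝ) ∈ Icc (0 : ℝ) 1 := right_mem_Icc.2 zero_le_one
  rw [integral_add ((hI hφ hγ hγ).add (hI hγ hφ hγ)) (hI hγ hγ hφ),
    integral_add (hI hφ hγ hγ) (hI hγ hφ hγ), integral_F3Form br hφ hγ hγ,
    integral_F3Form br hγ hφ hγ, integral_F3Form br hγ hγ hφ]
  have hφγγ : ∫ t in (0 : ℝ)..1, br (curveBr br φ γ t) (γ t)
      = br (curveBr br φ γ 1) (curve γ 1)
        + ∫ t in (0 : ℝ)..1, br (curve γ t) (br (curve φ t) (γ t)) :=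
    integral_br_curve halt (integrableOn_br_curve br hφ hγ) hγ
  have hγφγ : ∫ t in (0 : ℝ)..1, br (curveBr br γ φ t) (γ t)
      = br (curveBr br γ φ 1) (curve γ 1)
        + ∫ t in (0 : ℝ)..1, br (curve γ t) (br (curve γ t) (φ t)) :=
    integral_br_curve halt (integrableOn_br_curve br hγ hφ) hγ
  have hγγφ : ∫ t in (0 : ℝ)..1, br (curveBr br γ γ t) (φ t)
      = br (curveBr br γ γ 1) (curve φ 1)
        + ∫ t in (0 : ℝ)..1, br (curve φ t) (br (curve γ t) (γ t)) :=
    integral_br_curve halt (integrableOn_br_curve br hγ hγ) hφ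
  have hend : br (curveBr br γ φ 1) (curve γ 1)
      = br (curveBr br φ γ 1) (curve γ 1) - br (curve γ 1) (br (curve γ 1) (curve φ 1)) := by
    have h := br_curve_curve_s13 halt hγ hφ h1
    rw [curve_sub (integrableOn_br_curve br hγ hφ) (integrableOn_br_curve br hφ hγ) h1] at h
    rw [show curveBr br γ φ 1 = curveBr br φ γ 1 + br (curve γ 1) (curve φ 1) from
      (add_eq_of_eq_sub' h).symm, map_add, LinearMap.add_apply,
      ← halt.neg (curve γ 1) (br (curve γ 1) (curve φ 1))]
    abel
  have hjacobi := integral_br_curve_br_curve halt hjac hγ hφ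
  linear_combination (norm := module) (4 : ℝ)⁻¹ • hφγγ + (4 : ℝ)⁻¹ • hγφγ
    + (4 : ℝ)⁻¹ • hγγφ + (4 : ℝ)⁻¹ • hend + (3 : ℝ)⁻¹ • hjacobi

end ClosedForm

/-- first variation of the third-layer end-point functional. -/
theorem statement13 (V1 V2 V3 : Submodule ℝ 𝕓) (hC : CarnotStep3 br V1 V2 V3)
    (γ : ℝ → 𝕓) (hγ : γ ∈ H1zero V1) (φ : ℝ → 𝕓) (hφ : φ ∈ H1zero V1) :
    dF3 br γ φ = (∫ t in (0:ℝ)..1, br (curve γ t) (br (curve φ t) (γ t)))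
      + (2:ℝ)⁻¹ • br (∫ t in (0:ℝ)..1, br (curve φ t) (γ t)) (curve γ 1)
      + (4:ℝ)⁻¹ • br (∫ t in (0:ℝ)..1, br (curve γ t) (γ t)) (curve φ 1)
      + (12:ℝ)⁻¹ • br (curve γ 1) (br (curve γ 1) (curve φ 1)) := by
  obtain ⟨-, -, -, -, halt, hjac⟩ := hC
  have hγI : IntegrableOn γ (Icc 0 1) := hγ.2.integrable one_le_two
  have hφI : IntegrableOn φ (Icc 0 1) := hφ.2.integrable one_le_two
  rw [dF3_eq_integral_F3Form br hγI hφI]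
  exact integral_polarized_F3Form_eq halt hjac hγI hφI
end
end

section
/- In the free Carnot algebra of rank 2 and step 3, let γ(t) = t(c¹e₁ + c²e₂) with (c¹,c²) ≠ (0,0). Then d_γF³(φ) ∈ span{c¹e₄ + c²e₅} for every φ ∈ H¹(0); consequently the image of d_γE is a proper subspace of 𝔟, and γ is singular. -/
open MeasureTheory Set intervalIntegral

noncomputable section

variable {𝕓 : Type*} [NormedAddCommGroup 𝕓] [InnerProductSpace ℝ 𝕓] [FiniteDimensional ℝ 𝕓]

variable (br : 𝕓 →ₗ[ℝ] 𝕓 →ₗ[ℝ] 𝕓)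

/-! Along the horizontal line `γ(t) = tX`, the map `ε ↦ E(γ + εφ)` is a cubic polynomial in `ε`
whose coefficients are explicit integrals.  Because `⁅X, X⁆ = 0`, the linear coefficient of the
third layer is built only from brackets `⁅X, ξ⁆` and `⁅ξ, X⁆` with `ξ ∈ V²`, so `d_γE` takes
values in `V¹ ⊕ V² ⊕ ⁅X, V²⁆`.  In the free algebra of rank 2 and step 3, `⁅X, V²⁆` is the line
spanned by `⁅X, e₃⁆ = c¹e₄ + c²e₅`, a proper subspace of the plane `V³ = span{e₄, e₅}`. -/

section General

variable {E : Type*} [NormedAddCommGroup E]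

lemma intervalIntegrable_of_integrableOn_Icc {f : ℝ → E} {a b t : ℝ}
    (hf : IntegrableOn f (Icc a b)) (ht : t ∈ Icc a b) : IntervalIntegrable f volume a t :=
  (hf.mono_set (by rw [uIcc_of_le ht.1]; exact Icc_subset_Icc_right ht.2)).intervalIntegrable

variable [NormedSpace ℝ E]

lemma intervalIntegral_mem_submodule [CompleteSpace E] (W : Submodule ℝ E) [CompleteSpace W]
    {f : ℝ → E} {a b : ℝ} (hf : ∀ t, f t ∈ W) : (∫ t in a..b, f t) ∈ W :=
  W.subtypeₗᵢ.intervalIntegral_comp_comm (μ := volume) (a := a) (b := b)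
    (fun t => (⟨f t, hf t⟩ : W)) ▸ (∫ t in a..b, (⟨f t, hf t⟩ : W)).2

lemma hasDerivAt_cubic_smul (a b c : E) :
    HasDerivAt (fun ε : ℝ => ε • a + ε ^ 2 • b + ε ^ 3 • c) a 0 :=
  ((((hasDerivAt_id (0:ℝ)).smul_const a).add ((hasDerivAt_pow 2 (0:ℝ)).smul_const b)).add
    ((hasDerivAt_pow 3 (0:ℝ)).smul_const c)).congr_deriv (by simp)

lemma continuousOn_primitive_Icc {f : ℝ → E} {a b : ℝ} (hab : a ≤ b)
    (hf : IntegrableOn f (Icc a b)) : ContinuousOn (fun t => ∫ s in a..t, f s) (Icc a b) := by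
  rw [← uIcc_of_le hab] at hf ⊢
  exact continuousOn_primitive_interval hf

lemma integrableOn_bilin_of_continuousOn {F G : Type*} [NormedAddCommGroup F] [NormedSpace ℝ F]
    [NormedAddCommGroup G] [NormedSpace ℝ G] (B : E →L[ℝ] F →L[ℝ] G) {f : ℝ → E} {g : ℝ → F}
    {a b : ℝ} (hf : ContinuousOn f (Icc a b)) (hg : IntegrableOn g (Icc a b)) :
    IntegrableOn (fun t => B (f t) (g t)) (Icc a b) := by
  obtain ⟨C, hC⟩ := isCompact_Icc.exists_bound_of_continuousOn hf
  exact B.integrable_of_bilin_of_bdd_left C (hf.aestronglyMeasurable measurableSet_Icc)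
    ((ae_restrict_mem measurableSet_Icc).mono hC) hg

lemma intervalIntegral_cubic_smul [CompleteSpace E] {f g h : ℝ → E} {a b : ℝ}
    (hf : IntervalIntegrable f volume a b) (hg : IntervalIntegrable g volume a b)
    (hh : IntervalIntegrable h volume a b) (ε : ℝ) :
    ∫ t in a..b, (ε • f t + ε ^ 2 • g t + ε ^ 3 • h t)
      = ε • (∫ t in a..b, f t) + ε ^ 2 • (∫ t in a..b, g t) + ε ^ 3 • ∫ t in a..b, h t := by
  have hf' : IntervalIntegrable (fun t => ε • f t) volume a b := hf.smul ε
  have hg' : IntervalIntegrable (fun t => ε ^ 2 • g t) volume a b := hg.smul _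
  have hh' : IntervalIntegrable (fun t => ε ^ 3 • h t) volume a b := hh.smul _
  rw [integral_add (hf'.add hg') hh', integral_add hf' hg', intervalIntegral.integral_smul,
    intervalIntegral.integral_smul, intervalIntegral.integral_smul]

theorem Submodule.prod_lt_prod_of_lt_right {R M M' : Type*} [Semiring R] [AddCommMonoid M]
    [AddCommMonoid M'] [Module R M] [Module R M'] (p : Submodule R M)
    {q q' : Submodule R M'} (h : q < q') : p.prod q < p.prod q' := by
  obtain ⟨v, hv, hvq⟩ := SetLike.exists_of_lt h
  refine SetLike.lt_iff_le_and_exists.2 ⟨Submodule.prod_mono le_rfl h.le, (0, v), ?_, ?_⟩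
  · exact Submodule.mem_prod.2 ⟨p.zero_mem, hv⟩
  · exact fun hmem => hvq (Submodule.mem_prod.1 hmem).2

theorem Submodule.span_singleton_lt_span_pair {K V : Type*} [Field K] [AddCommGroup V]
    [Module K V] {x y z : V} (hxy : LinearIndependent K ![x, y]) (hz : z ∈ span K {x, y}) :
    span K {z} < span K {x, y} := by
  refine Submodule.lt_of_le_of_finrank_lt_finrank ((span_singleton_le_iff_mem _ _).2 hz) ?_
  have h2 : Module.finrank K (span K {x, y}) = 2 := by
    rw [← Matrix.range_cons_cons_empty x y ![]]
    exact (finrank_span_eq_card hxy).trans (Fintype.card_fin 2)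
  rw [h2]
  exact (finrank_span_le_card ({z} : Set V)).trans_lt (by simp)

theorem LinearMap.IsAlt.apply_mem_span_singleton_of_mem_span_pair {R M N : Type*} [CommRing R]
    [AddCommGroup M] [Module R M] [AddCommGroup N] [Module R N] {B : M →ₗ[R] M →ₗ[R] N}
    (hB : B.IsAlt) {a b u v : M} (hu : u ∈ Submodule.span R {a, b})
    (hv : v ∈ Submodule.span R {a, b}) : B u v ∈ Submodule.span R {B a b} := by
  obtain ⟨α, β, rfl⟩ := Submodule.mem_span_pair.1 hu
  obtain ⟨γ, δ, rfl⟩ := Submodule.mem_span_pair.1 hv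
  have hba : B b a = -B a b := (hB.neg a b).symm
  have hexp : B (α • a + β • b) (γ • a + δ • b) = (α * δ - β * γ) • B a b := by
    simp only [map_add, map_smul, LinearMap.add_apply, LinearMap.smul_apply, hB.self_eq_zero,
      hba, smul_zero, zero_add, add_zero, smul_neg]
    module
  exact hexp ▸ Submodule.smul_mem _ _ (Submodule.mem_span_singleton_self _)

end General

section Brackets

def brCLM : 𝕓 →L[ℝ] 𝕓 →L[ℝ] 𝕓 :=
  LinearMap.toContinuousLinearMap
    ((LinearMap.toContinuousLinearMap : (𝕓 →ₗ[ℝ] 𝕓) ≃ₗ[ℝ] (𝕓 →L[ℝ] 𝕓)).toLinearMap ∘ₗ br)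

variable {f g : ℝ → 𝕓}

lemma continuousOn_bracket {s : Set ℝ} (hf : ContinuousOn f s) (hg : ContinuousOn g s) :
    ContinuousOn (fun t => br (f t) (g t)) s :=
  ((brCLM br).continuous.comp_continuousOn hf).clm_apply hg

lemma integrableOn_bracket (hf : ContinuousOn f (Icc (0:ℝ) 1))
    (hg : IntegrableOn g (Icc (0:ℝ) 1)) : IntegrableOn (fun t => br (f t) (g t)) (Icc (0:ℝ) 1) :=
  integrableOn_bilin_of_continuousOn (brCLM br) hf hg

end Brackets

section Line

variable (X : 𝕓) (φ : ℝ → 𝕓)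

/- With `γ̇ = X + εφ`, i.e. `γ(t) = tX + εΦ(t)` where `Φ = curve φ`, these are the coefficients
of `ε` and `ε²` in `⁅γ, γ̇⁆` (using `⁅X, X⁆ = 0`) and in `γ²`. -/
def bracketLineCoeff₁ (t : ℝ) : 𝕓 := br (t • X) (φ t) + br (curve φ t) X

def bracketLineCoeff₂ (t : ℝ) : 𝕓 := br (curve φ t) (φ t)

def curve2LineCoeff₁ (t : ℝ) : 𝕓 := (2:ℝ)⁻¹ • ∫ s in (0:ℝ)..t, bracketLineCoeff₁ br X φ s

def curve2LineCoeff₂ (t : ℝ) : 𝕓 := (2:ℝ)⁻¹ • ∫ s in (0:ℝ)..t, bracketLineCoeff₂ br φ s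

/- The integrand of `F³` is `(1/12)⁅γ,⁅γ,γ̇⁆⁆ + ½⁅γ²,γ̇⁆`, since `½ · ½ - 1/6 = 1/12`; these are its
coefficients of `ε`, `ε²`, `ε³`. -/
def F3LineIntegrand₁ (t : ℝ) : 𝕓 :=
  (12:ℝ)⁻¹ • br (t • X) (bracketLineCoeff₁ br X φ t) + (2:ℝ)⁻¹ • br (curve2LineCoeff₁ br X φ t) X

def F3LineIntegrand₂ (t : ℝ) : 𝕓 :=
  (12:ℝ)⁻¹ • (br (curve φ t) (bracketLineCoeff₁ br X φ t) + br (t • X) (bracketLineCoeff₂ br φ t))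
    + (2:ℝ)⁻¹ • (br (curve2LineCoeff₁ br X φ t) (φ t) + br (curve2LineCoeff₂ br φ t) X)

def F3LineIntegrand₃ (t : ℝ) : 𝕓 :=
  (12:ℝ)⁻¹ • br (curve φ t) (bracketLineCoeff₂ br φ t)
    + (2:ℝ)⁻¹ • br (curve2LineCoeff₂ br φ t) (φ t)

variable {φ} (hφ : IntegrableOn φ (Icc (0:ℝ) 1))
include hφ

set_option linter.unusedSectionVars false in
lemma continuousOn_curve_s17 : ContinuousOn (curve φ) (Icc (0:ℝ) 1) :=
  continuousOn_primitive_Icc zero_le_one hφ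

lemma integrableOn_bracketLineCoeff₁ :
    IntegrableOn (bracketLineCoeff₁ br X φ) (Icc (0:ℝ) 1) :=
  (integrableOn_bracket br (by fun_prop) hφ).add
    (continuousOn_bracket br (continuousOn_curve_s17 hφ) continuousOn_const).integrableOn_Icc

lemma integrableOn_bracketLineCoeff₂ :
    IntegrableOn (bracketLineCoeff₂ br φ) (Icc (0:ℝ) 1) :=
  integrableOn_bracket br (continuousOn_curve_s17 hφ) hφ

lemma continuousOn_curve2LineCoeff₁ : ContinuousOn (curve2LineCoeff₁ br X φ) (Icc (0:ℝ) 1) :=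
  (continuousOn_primitive_Icc zero_le_one (integrableOn_bracketLineCoeff₁ br X hφ)).const_smul _

lemma continuousOn_curve2LineCoeff₂ : ContinuousOn (curve2LineCoeff₂ br φ) (Icc (0:ℝ) 1) :=
  (continuousOn_primitive_Icc zero_le_one (integrableOn_bracketLineCoeff₂ br hφ)).const_smul _

lemma integrableOn_F3LineIntegrand₁ : IntegrableOn (F3LineIntegrand₁ br X φ) (Icc (0:ℝ) 1) :=
  ((integrableOn_bracket br (by fun_prop) (integrableOn_bracketLineCoeff₁ br X hφ)).smul _).add
    ((continuousOn_bracket br (continuousOn_curve2LineCoeff₁ br X hφ)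
      continuousOn_const).integrableOn_Icc.smul _)

lemma integrableOn_F3LineIntegrand₂ : IntegrableOn (F3LineIntegrand₂ br X φ) (Icc (0:ℝ) 1) :=
  (((integrableOn_bracket br (continuousOn_curve_s17 hφ) (integrableOn_bracketLineCoeff₁ br X hφ)).add
    (integrableOn_bracket br (by fun_prop) (integrableOn_bracketLineCoeff₂ br hφ))).smul _).add
    (((integrableOn_bracket br (continuousOn_curve2LineCoeff₁ br X hφ) hφ).add
      (continuousOn_bracket br (continuousOn_curve2LineCoeff₂ br hφ)
        continuousOn_const).integrableOn_Icc).smul _)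

lemma integrableOn_F3LineIntegrand₃ : IntegrableOn (F3LineIntegrand₃ br φ) (Icc (0:ℝ) 1) :=
  ((integrableOn_bracket br (continuousOn_curve_s17 hφ) (integrableOn_bracketLineCoeff₂ br hφ)).smul
    _).add ((integrableOn_bracket br (continuousOn_curve2LineCoeff₂ br hφ) hφ).smul _)

variable {X}

lemma curve_line_add (ε : ℝ) {t : ℝ} (ht : t ∈ Icc (0:ℝ) 1) :
    curve ((fun _ : ℝ => X) + ε • φ) t = t • X + ε • curve φ t := by
  have hint := intervalIntegrable_of_integrableOn_Icc hφ ht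
  calc curve ((fun _ : ℝ => X) + ε • φ) t
      = (∫ _ in (0:ℝ)..t, X) + ∫ s in (0:ℝ)..t, ε • φ s :=
        integral_add intervalIntegrable_const (hint.smul ε)
    _ = t • X + ε • curve φ t := by
        rw [intervalIntegral.integral_const, intervalIntegral.integral_smul, sub_zero, curve]

lemma hasDerivAt_F1_line :
    HasDerivAt (fun ε : ℝ => F1 ((fun _ : ℝ => X) + ε • φ)) (curve φ 1) 0 := by
  have h1 : (1:ℝ) ∈ Icc (0:ℝ) 1 := right_mem_Icc.2 zero_le_one
  simp only [F1, curve_line_add hφ _ h1, one_smul]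
  exact ((hasDerivAt_id (0:ℝ)).smul_const _).const_add X |>.congr_deriv (one_smul ℝ _)

variable (hXX : br X X = 0)
include hXX

lemma bracket_line_add (ε : ℝ) {t : ℝ} (ht : t ∈ Icc (0:ℝ) 1) :
    br (curve ((fun _ : ℝ => X) + ε • φ) t) (((fun _ : ℝ => X) + ε • φ) t)
      = ε • bracketLineCoeff₁ br X φ t + ε ^ 2 • bracketLineCoeff₂ br φ t := by
  simp only [curve_line_add hφ ε ht, Pi.add_apply, Pi.smul_apply, bracketLineCoeff₁,
    bracketLineCoeff₂, map_add, map_smul, LinearMap.add_apply, LinearMap.smul_apply, hXX]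
  module

lemma curve2_line_add (ε : ℝ) {t : ℝ} (ht : t ∈ Icc (0:ℝ) 1) :
    curve2 br ((fun _ : ℝ => X) + ε • φ) t
      = ε • curve2LineCoeff₁ br X φ t + ε ^ 2 • curve2LineCoeff₂ br φ t := by
  have h₁ := intervalIntegrable_of_integrableOn_Icc (integrableOn_bracketLineCoeff₁ br X hφ) ht
  have h₂ := intervalIntegrable_of_integrableOn_Icc (integrableOn_bracketLineCoeff₂ br hφ) ht
  have hexp : EqOn (fun s => br (curve ((fun _ : ℝ => X) + ε • φ) s)
      (((fun _ : ℝ => X) + ε • φ) s))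
      (fun s => ε • bracketLineCoeff₁ br X φ s + ε ^ 2 • bracketLineCoeff₂ br φ s)
      (uIcc (0:ℝ) t) := fun s hs => by
    rw [uIcc_of_le ht.1] at hs
    exact bracket_line_add br hφ hXX ε ⟨hs.1, hs.2.trans ht.2⟩
  have h₁' : IntervalIntegrable (fun s => ε • bracketLineCoeff₁ br X φ s) volume 0 t := h₁.smul ε
  have h₂' : IntervalIntegrable (fun s => ε ^ 2 • bracketLineCoeff₂ br φ s) volume 0 t :=
    h₂.smul _
  rw [curve2, integral_congr hexp, integral_add h₁' h₂',
    intervalIntegral.integral_smul, intervalIntegral.integral_smul, curve2LineCoeff₁,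
    curve2LineCoeff₂]
  module

lemma F3_line_add (ε : ℝ) :
    F3 br ((fun _ : ℝ => X) + ε • φ)
      = ε • (∫ t in (0:ℝ)..1, F3LineIntegrand₁ br X φ t)
        + ε ^ 2 • (∫ t in (0:ℝ)..1, F3LineIntegrand₂ br X φ t)
        + ε ^ 3 • ∫ t in (0:ℝ)..1, F3LineIntegrand₃ br φ t := by
  have h1 : (1:ℝ) ∈ Icc (0:ℝ) 1 := right_mem_Icc.2 zero_le_one
  rw [← intervalIntegral_cubic_smul
    (intervalIntegrable_of_integrableOn_Icc (integrableOn_F3LineIntegrand₁ br X hφ) h1)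
    (intervalIntegrable_of_integrableOn_Icc (integrableOn_F3LineIntegrand₂ br X hφ) h1)
    (intervalIntegrable_of_integrableOn_Icc (integrableOn_F3LineIntegrand₃ br hφ) h1)]
  refine integral_congr fun t ht => ?_
  rw [uIcc_of_le zero_le_one] at ht
  simp only [curve2_line_add br hφ hXX ε ht,
    curve_line_add hφ ε ht, Pi.add_apply, Pi.smul_apply, F3LineIntegrand₁, F3LineIntegrand₂,
    F3LineIntegrand₃, bracketLineCoeff₁, bracketLineCoeff₂, map_add, map_smul,
    LinearMap.add_apply, LinearMap.smul_apply, hXX, smul_zero, zero_add]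
  module

lemma hasDerivAt_F2_line :
    HasDerivAt (fun ε : ℝ => F2 br ((fun _ : ℝ => X) + ε • φ)) (curve2LineCoeff₁ br X φ 1) 0 := by
  have h1 : (1:ℝ) ∈ Icc (0:ℝ) 1 := right_mem_Icc.2 zero_le_one
  simp only [F2, curve2_line_add br hφ hXX _ h1]
  simpa using hasDerivAt_cubic_smul (curve2LineCoeff₁ br X φ 1) (curve2LineCoeff₂ br φ 1) 0

lemma hasDerivAt_F3_line :
    HasDerivAt (fun ε : ℝ => F3 br ((fun _ : ℝ => X) + ε • φ))
      (∫ t in (0:ℝ)..1, F3LineIntegrand₁ br X φ t) 0 := by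
  simp only [F3_line_add br hφ hXX]
  exact hasDerivAt_cubic_smul _ _ _

lemma dE_line : dE br (fun _ : ℝ => X) φ
    = (curve φ 1, curve2LineCoeff₁ br X φ 1, ∫ t in (0:ℝ)..1, F3LineIntegrand₁ br X φ t) :=
  ((hasDerivAt_F1_line hφ).prodMk
    ((hasDerivAt_F2_line br hφ hXX).prodMk (hasDerivAt_F3_line br hφ hXX))).deriv

lemma dF3_line : dF3 br (fun _ : ℝ => X) φ = ∫ t in (0:ℝ)..1, F3LineIntegrand₁ br X φ t :=
  (hasDerivAt_F3_line br hφ hXX).deriv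

end Line

set_option linter.unusedSectionVars false in
lemma integrableOn_of_mem_H1zero {V1 : Submodule ℝ 𝕓} {φ : ℝ → 𝕓} (hφ : φ ∈ H1zero V1) :
    IntegrableOn φ (Icc (0:ℝ) 1) :=
  hφ.2.integrable one_le_two

section Layers

variable {V1 V2 W : Submodule ℝ 𝕓} {X : 𝕓} {φ : ℝ → 𝕓}
  (hX : X ∈ V1) (hV1V1 : ∀ u ∈ V1, ∀ v ∈ V1, br u v ∈ V2)

lemma curve_mem_s17 (hφ : ∀ t, φ t ∈ V1) (t : ℝ) : curve φ t ∈ V1 :=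
  intervalIntegral_mem_submodule V1 hφ

include hX hV1V1

lemma bracketLineCoeff₁_mem (hφ : ∀ t, φ t ∈ V1) (t : ℝ) : bracketLineCoeff₁ br X φ t ∈ V2 :=
  add_mem (hV1V1 _ (V1.smul_mem t hX) _ (hφ t)) (hV1V1 _ (curve_mem_s17 hφ t) _ hX)

lemma curve2LineCoeff₁_mem (hφ : ∀ t, φ t ∈ V1) (t : ℝ) : curve2LineCoeff₁ br X φ t ∈ V2 :=
  V2.smul_mem _ (intervalIntegral_mem_submodule V2 (bracketLineCoeff₁_mem br hX hV1V1 hφ))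

variable (halt : ∀ x, br x x = 0) (hXV2 : ∀ ξ ∈ V2, br X ξ ∈ W)
include halt hXV2

lemma integral_F3LineIntegrand₁_mem (hφ : ∀ t, φ t ∈ V1) :
    (∫ t in (0:ℝ)..1, F3LineIntegrand₁ br X φ t) ∈ W := by
  refine intervalIntegral_mem_submodule W fun t => add_mem (W.smul_mem _ ?_) (W.smul_mem _ ?_)
  · rw [map_smul, LinearMap.smul_apply]
    exact W.smul_mem t (hXV2 _ (bracketLineCoeff₁_mem br hX hV1V1 hφ t))
  · rw [← LinearMap.IsAlt.neg halt]
    exact neg_mem (hXV2 _ (curve2LineCoeff₁_mem br hX hV1V1 hφ t))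

lemma dE_line_mem_prod (hφ : φ ∈ H1zero V1) :
    dE br (fun _ : ℝ => X) φ ∈ V1.prod (V2.prod W) := by
  rw [dE_line br (integrableOn_of_mem_H1zero hφ) (halt X)]
  exact ⟨curve_mem_s17 hφ.1 1, curve2LineCoeff₁_mem br hX hV1V1 hφ.1 1,
    integral_F3LineIntegrand₁_mem br hX hV1V1 halt hXV2 hφ.1⟩

lemma dF3_line_mem (hφ : φ ∈ H1zero V1) : dF3 br (fun _ : ℝ => X) φ ∈ W := by
  rw [dF3_line br (integrableOn_of_mem_H1zero hφ) (halt X)]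
  exact integral_F3LineIntegrand₁_mem br hX hV1V1 halt hXV2 hφ.1

end Layers

theorem statement17
    (e1 e2 e3 e4 e5 : 𝕓)
    (hli : LinearIndependent ℝ ![e1, e2, e3, e4, e5])
    (halt : ∀ x, br x x = 0)
    (h12 : br e1 e2 = e3) (h13 : br e1 e3 = e4) (h23 : br e2 e3 = e5)
    (V1 V2 V3 : Submodule ℝ 𝕓)
    (hV1 : V1 = Submodule.span ℝ {e1, e2})
    (hV2 : V2 = Submodule.span ℝ {e3})
    (hV3 : V3 = Submodule.span ℝ {e4, e5})
    (c1 c2 : ℝ) :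
    (∀ φ ∈ H1zero V1, dF3 br (fun _ : ℝ => c1 • e1 + c2 • e2) φ ∈
      Submodule.span ℝ {c1 • e4 + c2 • e5}) ∧
    IsSingular br V1 V2 V3 (fun _ : ℝ => c1 • e1 + c2 • e2) := by
  subst hV1 hV2 hV3
  set X := c1 • e1 + c2 • e2
  have hX : X ∈ Submodule.span ℝ {e1, e2} := Submodule.mem_span_pair.2 ⟨c1, c2, rfl⟩
  have hV1V1 : ∀ u ∈ Submodule.span ℝ {e1, e2}, ∀ v ∈ Submodule.span ℝ {e1, e2},
      br u v ∈ Submodule.span ℝ {e3} := fun u hu v hv =>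
    h12 ▸ LinearMap.IsAlt.apply_mem_span_singleton_of_mem_span_pair halt hu hv
  have hXe3 : br X e3 = c1 • e4 + c2 • e5 := by
    simp only [X, map_add, map_smul, LinearMap.add_apply, LinearMap.smul_apply, h13, h23]
  have hXV2 : ∀ ξ ∈ Submodule.span ℝ {e3}, br X ξ ∈ Submodule.span ℝ {c1 • e4 + c2 • e5} :=
    fun ξ hξ => by
      obtain ⟨r, rfl⟩ := Submodule.mem_span_singleton.1 hξ
      rw [map_smul, hXe3]
      exact Submodule.smul_mem _ r (Submodule.mem_span_singleton_self _)
  refine ⟨fun φ hφ => dF3_line_mem br hX hV1V1 halt hXV2 hφ, ?_⟩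
  have h45 : LinearIndependent ℝ ![e4, e5] := by
    convert hli.comp ![3, 4] (by decide) using 1
    ext i; fin_cases i <;> rfl
  have hZ : c1 • e4 + c2 • e5 ∈ Submodule.span ℝ {e4, e5} := Submodule.mem_span_pair.2 ⟨c1, c2, rfl⟩
  refine (Submodule.span_le.2 ?_).trans_lt (Submodule.prod_lt_prod_of_lt_right _
    (Submodule.prod_lt_prod_of_lt_right _ (Submodule.span_singleton_lt_span_pair h45 hZ)))
  rintro _ ⟨φ, hφ, rfl⟩
  exact dE_line_mem_prod br hX hV1V1 halt hXV2 hφ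
end
end
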